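/- arXiv:2004.01599 — 4 statements merged into one kernel-verified Lean document; each statement's English description precedes it below -/
import Mathlib

section
/- Let 𝒪 be a finite family of pairwise disjoint closed axis-parallel rectangles in ℝ² (obstacles). Let p, q ∈ ℝ² lie outside the interior of every obstacle, and let o be any point of the rectangle B(p,q) that lies outside the interior of every obstacle. Then σ₁(p,o) + σ₁(o,q) ≤ 3·σ₁(p,q), where σ₁ denotes the L1-geodesic distance amid the obstacles. -/
open scoped ENNReal

namespace GeoSpanner

/-- Points of `ℝ^d`. -/
abbrev Pt (d : ℕ) := Fin d → ℝ

/-- The L1 norm `‖x‖₁ = ∑ |xᵢ|`. -/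
def nrm1 {d : ℕ} (x : Pt d) : ℝ := ∑ i, |x i|

/-- The Euclidean (L2) norm. -/
noncomputable def nrm2 {d : ℕ} (x : Pt d) : ℝ := Real.sqrt (∑ i, (x i) ^ 2)

/-- An axis-parallel box: a product of closed bounded intervals. -/
def IsBox {d : ℕ} (B : Set (Pt d)) : Prop := ∃ a b : Pt d, a ≤ b ∧ B = Set.Icc a b

/-- A valid family of obstacles: finitely many pairwise disjoint closed
axis-parallel boxes. -/
def IsObstacleFamily {d : ℕ} (O : Finset (Set (Pt d))) : Prop :=
  (∀ B ∈ O, IsBox B) ∧ (O : Set (Set (Pt d))).Pairwise Disjoint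

/-- The free space: points outside the interior of every obstacle. -/
def free {d : ℕ} (O : Finset (Set (Pt d))) : Set (Pt d) :=
  {x | ∀ B ∈ O, x ∉ interior B}

/-- Length of the path `γ` restricted to `[0,1]`, measured as total variation
with respect to the norm `nrm`. -/
noncomputable def pathLen {d : ℕ} (nrm : Pt d → ℝ) (γ : ℝ → Pt d) : ℝ≥0∞ :=
  ⨆ (n : ℕ) (t : Fin (n + 1) → ℝ)
    (_ : Monotone t ∧ ∀ i, t i ∈ Set.Icc (0 : ℝ) 1),
      ∑ i : Fin n, ENNReal.ofReal (nrm (γ (t i.succ) - γ (t i.castSucc)))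

/-- `γ` is a continuous path from `p` to `q` staying inside the region `F`. -/
def IsPathIn {d : ℕ} (F : Set (Pt d)) (p q : Pt d) (γ : ℝ → Pt d) : Prop :=
  ContinuousOn γ (Set.Icc 0 1) ∧ γ 0 = p ∧ γ 1 = q ∧
    ∀ t ∈ Set.Icc (0 : ℝ) 1, γ t ∈ F

/-- Geodesic distance from `p` to `q` inside the region `F`, with path lengths
measured with respect to the norm `nrm`. -/
noncomputable def geo {d : ℕ} (nrm : Pt d → ℝ) (F : Set (Pt d)) (p q : Pt d) : ℝ≥0∞ :=
  ⨅ (γ : ℝ → Pt d) (_ : IsPathIn F p q γ), pathLen nrm γ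

/-- `B(p,q)`: the closed axis-parallel box with opposite corners `p` and `q`. -/
def corners {d : ℕ} (p q : Pt d) : Set (Pt d) := Set.uIcc p q

/-- Graph distance over the edge set `E` with edge weights given by `σ`. -/
noncomputable def graphDist {d : ℕ} (σ : Pt d → Pt d → ℝ≥0∞) (E : Set (Sym2 (Pt d)))
    (p q : Pt d) : ℝ≥0∞ :=
  ⨅ (n : ℕ) (x : Fin (n + 1) → Pt d)
    (_ : x 0 = p ∧ x (Fin.last n) = q ∧ ∀ i : Fin n, s(x i.castSucc, x i.succ) ∈ E),
      ∑ i : Fin n, σ (x i.castSucc) (x i.succ)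

end GeoSpanner

/-!
Through `o` runs an `ℓ¹`-geodesic staircase of free space: going north from `o`, whenever it
meets the bottom edge of an obstacle it slides east along that edge to the corner and goes on
north; its south-western half is the same construction after a point reflection. When `p` and
`q` lie in the north-west and south-east quadrants of `o`, every free path `γ` from `p` to `q`
crosses the staircase at some `z`, and then
`σ₁(p,o) + σ₁(o,q) ≤ |γ| + 2‖z - o‖₁ ≤ |γ| + ‖p - q‖₁ + ‖z - p‖₁ + ‖z - q‖₁ ≤ 3|γ|`,
because `‖p - o‖₁ + ‖o - q‖₁ = ‖p - q‖₁` for `o ∈ B(p,q)`. The other orientation of `p` and `q`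
is reduced to this one by a reflection in the first coordinate axis.
-/

namespace GeoSpanner

open Set

section Length

variable {d : ℕ}

lemma edist_toLp_one (x y : Pt d) :
    edist (WithLp.toLp 1 x) (WithLp.toLp 1 y) = ENNReal.ofReal (nrm1 (x - y)) := by
  rw [edist_dist, PiLp.dist_eq_of_L1]
  simp [nrm1, Real.dist_eq]

lemma pathLen_eq_eVariationOn {E : Type*} [PseudoEMetricSpace E] {nrm : Pt d → ℝ}
    {f : Pt d → E} (hf : ∀ x y, edist (f x) (f y) = ENNReal.ofReal (nrm (x - y)))
    (γ : ℝ → Pt d) : pathLen nrm γ = eVariationOn (f ∘ γ) (Icc 0 1) := by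
  apply le_antisymm
  · refine iSup₂_le fun n t => iSup_le fun ⟨ht, ht01⟩ => ?_
    have hu : Monotone fun j => t (Fin.clamp j n) := fun a b hab =>
      ht (Fin.mk_le_mk.mpr (min_le_min_right n hab))
    refine le_of_eq_of_le ?_ (eVariationOn.sum_le (n := n) hu fun j => ht01 _)
    rw [← Fin.sum_univ_eq_sum_range]
    refine Finset.sum_congr rfl fun i _ => ?_
    have h1 : Fin.clamp i n = i.castSucc := Fin.ext (min_eq_left i.isLt.le)
    have h2 : Fin.clamp (i + 1) n = i.succ := Fin.ext (min_eq_left i.isLt)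
    simp [h1, h2, hf]
  · refine iSup_le fun ⟨n, u, hu, hus⟩ => ?_
    refine le_iSup₂_of_le n (fun j : Fin (n + 1) => u j)
      (le_iSup_of_le ⟨fun a b hab => hu hab, fun j => hus j⟩ (le_of_eq ?_))
    rw [← Fin.sum_univ_eq_sum_range]
    simp [hf]

lemma eVariationOn_Icc_add_Icc {E : Type*} [PseudoEMetricSpace E] (f : ℝ → E) {a b c : ℝ}
    (hab : a ≤ b) (hbc : b ≤ c) :
    eVariationOn f (Icc a b) + eVariationOn f (Icc b c) = eVariationOn f (Icc a c) := by
  simpa using eVariationOn.Icc_add_Icc f (s := univ) hab hbc (mem_univ b)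

lemma pathLen_nrm1 (γ : ℝ → Pt d) :
    pathLen nrm1 γ = eVariationOn (fun t => WithLp.toLp 1 (γ t)) (Icc 0 1) :=
  pathLen_eq_eVariationOn edist_toLp_one γ

end Length

section Geodesic

variable {d : ℕ} {F : Set (Pt d)}

lemma geo_le_pathLen {nrm : Pt d → ℝ} {p q : Pt d} {γ : ℝ → Pt d} (h : IsPathIn F p q γ) :
    geo nrm F p q ≤ pathLen nrm γ :=
  iInf₂_le γ h

lemma geo_comp_le {nrm : Pt d → ℝ} {F' : Set (Pt d)} {e : Pt d → Pt d} (he : Continuous e)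
    (hnrm : ∀ x y, nrm (e x - e y) = nrm (x - y)) (hF : MapsTo e F F') (p q : Pt d) :
    geo nrm F' (e p) (e q) ≤ geo nrm F p q :=
  le_iInf₂ fun γ ⟨hc, h0, h1, hγ⟩ =>
    (geo_le_pathLen ⟨he.comp_continuousOn hc, by simp [h0], by simp [h1],
      fun t ht => hF (hγ t ht)⟩).trans_eq (by simp [pathLen, hnrm])

lemma geo_image {nrm : Pt d → ℝ} (e : Pt d ≃ₜ Pt d) (he : ∀ x y, nrm (e x - e y) = nrm (x - y))
    (p q : Pt d) : geo nrm (e '' F) (e p) (e q) = geo nrm F p q := by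
  refine le_antisymm (geo_comp_le e.continuous he (mapsTo_image e F) p q) ?_
  have he' : ∀ x y, nrm (e.symm x - e.symm y) = nrm (x - y) := fun x y => by
    simpa using (he (e.symm x) (e.symm y)).symm
  have hmaps : MapsTo e.symm (e '' F) F := by
    rintro _ ⟨y, hy, rfl⟩
    simpa using hy
  simpa using geo_comp_le e.symm.continuous he' hmaps (e p) (e q)

lemma geo_le_eVariationOn {γ : ℝ → Pt d} {a b : ℝ} (hab : a ≤ b)
    (hγ : ContinuousOn γ (Icc a b)) (hF : ∀ t ∈ Icc a b, γ t ∈ F) :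
    geo nrm1 F (γ a) (γ b) ≤ eVariationOn (fun t => WithLp.toLp 1 (γ t)) (Icc a b) := by
  set φ : ℝ → ℝ := fun t => a + t * (b - a)
  have hφ : MapsTo φ (Icc 0 1) (Icc a b) := fun t ⟨h0, h1⟩ => ⟨by nlinarith, by nlinarith⟩
  have hφ_mono : MonotoneOn φ (Icc 0 1) := fun x _ y _ hxy => by dsimp [φ]; nlinarith
  calc geo nrm1 F (γ a) (γ b) ≤ pathLen nrm1 (γ ∘ φ) :=
        geo_le_pathLen ⟨hγ.comp (by fun_prop) hφ, by simp [φ], by simp [φ],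
          fun t ht => hF _ (hφ ht)⟩
    _ ≤ _ := by
        rw [pathLen_nrm1]
        exact eVariationOn.comp_le_of_monotoneOn (fun t => WithLp.toLp 1 (γ t)) φ hφ_mono hφ

lemma geo_symm_le (p q : Pt d) : geo nrm1 F q p ≤ geo nrm1 F p q := by
  refine le_iInf₂ fun γ ⟨hc, h0, h1, hγ⟩ => ?_
  have hφ : MapsTo (fun t : ℝ => 1 - t) (Icc 0 1) (Icc 0 1) :=
    fun t ⟨h0, h1⟩ => ⟨by linarith, by linarith⟩
  calc geo nrm1 F q p ≤ pathLen nrm1 (fun t => γ (1 - t)) :=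
        geo_le_pathLen ⟨hc.comp (by fun_prop) hφ, by simp [h1], by simp [h0],
          fun t ht => hγ _ (hφ ht)⟩
    _ ≤ pathLen nrm1 γ := by
        rw [pathLen_nrm1, pathLen_nrm1]
        exact eVariationOn.comp_le_of_antitoneOn (fun t => WithLp.toLp 1 (γ t)) (fun t => 1 - t)
          (fun x _ y _ h => by linarith) hφ

lemma geo_comm (p q : Pt d) : geo nrm1 F p q = geo nrm1 F q p :=
  le_antisymm (geo_symm_le q p) (geo_symm_le p q)

noncomputable def pathAppend (γ₁ γ₂ : ℝ → Pt d) (t : ℝ) : Pt d :=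
  if t ≤ 1 / 2 then γ₁ (2 * t) else γ₂ (2 * t - 1)

section Append

variable {p q r : Pt d} {γ₁ γ₂ : ℝ → Pt d}

lemma eqOn_pathAppend_left : EqOn (pathAppend γ₁ γ₂) (fun t => γ₁ (2 * t)) (Icc 0 (1 / 2)) :=
  fun _ ht => if_pos ht.2

lemma eqOn_pathAppend_right (h : γ₁ 1 = γ₂ 0) :
    EqOn (pathAppend γ₁ γ₂) (fun t => γ₂ (2 * t - 1)) (Icc (1 / 2) 1) := by
  intro t ⟨ht, _⟩
  rcases ht.eq_or_lt with rfl | ht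
  · norm_num [pathAppend, h]
  · exact if_neg (not_le.mpr ht)

lemma IsPathIn.append (h₁ : IsPathIn F p q γ₁) (h₂ : IsPathIn F q r γ₂) :
    IsPathIn F p r (pathAppend γ₁ γ₂) := by
  obtain ⟨c₁, s₁, e₁, m₁⟩ := h₁
  obtain ⟨c₂, s₂, e₂, m₂⟩ := h₂
  have hmap₁ : MapsTo (fun t : ℝ => 2 * t) (Icc 0 (1 / 2)) (Icc 0 1) :=
    fun t ⟨h0, h1⟩ => ⟨by linarith, by linarith⟩
  have hmap₂ : MapsTo (fun t : ℝ => 2 * t - 1) (Icc (1 / 2) 1) (Icc 0 1) :=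
    fun t ⟨h0, h1⟩ => ⟨by linarith, by linarith⟩
  have hjoin : γ₁ 1 = γ₂ 0 := e₁.trans s₂.symm
  refine ⟨?_, by norm_num [pathAppend, s₁], by norm_num [pathAppend, e₂], fun t ht => ?_⟩
  · rw [← Icc_union_Icc_eq_Icc (by norm_num : (0 : ℝ) ≤ 1 / 2) (by norm_num : (1 / 2 : ℝ) ≤ 1)]
    exact ((c₁.comp (by fun_prop) hmap₁).congr eqOn_pathAppend_left).union_of_isClosed
      ((c₂.comp (by fun_prop) hmap₂).congr (eqOn_pathAppend_right hjoin)) isClosed_Icc isClosed_Icc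
  · rcases le_total t (1 / 2) with h | h
    · rw [eqOn_pathAppend_left ⟨ht.1, h⟩]; exact m₁ _ (hmap₁ ⟨ht.1, h⟩)
    · rw [eqOn_pathAppend_right hjoin ⟨h, ht.2⟩]; exact m₂ _ (hmap₂ ⟨h, ht.2⟩)

lemma pathLen_append_le (h₁ : IsPathIn F p q γ₁) (h₂ : IsPathIn F q r γ₂) :
    pathLen nrm1 (pathAppend γ₁ γ₂) ≤ pathLen nrm1 γ₁ + pathLen nrm1 γ₂ := by
  have hjoin : γ₁ 1 = γ₂ 0 := h₁.2.2.1.trans h₂.2.1.symm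
  simp only [pathLen_nrm1]
  rw [← eVariationOn_Icc_add_Icc _ (by norm_num : (0 : ℝ) ≤ 1 / 2) (by norm_num : (1 / 2 : ℝ) ≤ 1)]
  gcongr
  · rw [eVariationOn.eq_of_eqOn (fun t ht => congrArg (WithLp.toLp 1) (eqOn_pathAppend_left ht))]
    exact eVariationOn.comp_le_of_monotoneOn (fun t => WithLp.toLp 1 (γ₁ t)) (fun t => 2 * t)
      (fun x _ y _ h => by linarith) fun t ⟨h0, h1⟩ => ⟨by linarith, by linarith⟩
  · rw [eVariationOn.eq_of_eqOn
      (fun t ht => congrArg (WithLp.toLp 1) (eqOn_pathAppend_right hjoin ht))]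
    exact eVariationOn.comp_le_of_monotoneOn (fun t => WithLp.toLp 1 (γ₂ t)) (fun t => 2 * t - 1)
      (fun x _ y _ h => by linarith) fun t ⟨h0, h1⟩ => ⟨by linarith, by linarith⟩

end Append

lemma geo_triangle (p q r : Pt d) : geo nrm1 F p r ≤ geo nrm1 F p q + geo nrm1 F q r :=
  ENNReal.le_iInf_add_iInf fun _ _ => ENNReal.le_iInf_add_iInf fun h₁ h₂ =>
    (geo_le_pathLen (h₁.append h₂)).trans (pathLen_append_le h₁ h₂)

end Geodesic

section ThreeApprox

variable {d : ℕ}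

lemma edist_add_edist_of_mem_corners {p q o : Pt d} (h : o ∈ corners p q) :
    edist (WithLp.toLp 1 p) (WithLp.toLp 1 o) + edist (WithLp.toLp 1 o) (WithLp.toLp 1 q) =
      edist (WithLp.toLp 1 p) (WithLp.toLp 1 q) := by
  rw [corners, ← pi_univ_uIcc] at h
  simp only [PiLp.edist_eq_of_L1, ← Finset.sum_add_distrib]
  refine Finset.sum_congr rfl fun i _ => ?_
  have hi : o i ∈ segment ℝ (p i) (q i) := by rw [segment_eq_uIcc]; exact h i (mem_univ i)
  simp only [edist_dist, ← ENNReal.ofReal_add dist_nonneg dist_nonneg,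
    dist_add_dist_of_mem_segment hi]

theorem geo_add_geo_le_of_forall_path_meets {F : Set (Pt d)} {p q o : Pt d} (C : Set (Pt d))
    (hbox : o ∈ corners p q)
    (hC : ∀ z ∈ C, geo nrm1 F z o ≤ edist (WithLp.toLp 1 z) (WithLp.toLp 1 o))
    (hmeet : ∀ γ, IsPathIn F p q γ → ∃ s ∈ Icc (0 : ℝ) 1, γ s ∈ C) :
    geo nrm1 F p o + geo nrm1 F o q ≤ 3 * geo nrm1 F p q := by
  have h3 : 3 * geo nrm1 F p q = ⨅ (γ) (_ : IsPathIn F p q γ), 3 * pathLen nrm1 γ := by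
    simp only [geo, ENNReal.mul_iInf_of_ne (a := 3) (by norm_num) (by norm_num)]
  refine h3 ▸ le_iInf₂ fun γ hγ => ?_
  obtain ⟨s, hs, hz⟩ := hmeet γ hγ
  obtain ⟨hc, hγ0, hγ1, hF⟩ := hγ
  set z := γ s
  set V : Set ℝ → ℝ≥0∞ := fun I => eVariationOn (fun t => WithLp.toLp 1 (γ t)) I
  set e : Pt d → Pt d → ℝ≥0∞ := fun x y => edist (WithLp.toLp 1 x) (WithLp.toLp 1 y)
  have hV : V (Icc 0 s) + V (Icc s 1) = pathLen nrm1 γ := by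
    rw [pathLen_nrm1]; exact eVariationOn_Icc_add_Icc _ hs.1 hs.2
  have hpz : geo nrm1 F p z ≤ V (Icc 0 s) := hγ0 ▸ geo_le_eVariationOn hs.1
    (hc.mono (Icc_subset_Icc_right hs.2)) fun t ht => hF t ⟨ht.1, ht.2.trans hs.2⟩
  have hzq : geo nrm1 F z q ≤ V (Icc s 1) := hγ1 ▸ geo_le_eVariationOn hs.2
    (hc.mono (Icc_subset_Icc_left hs.1)) fun t ht => hF t ⟨hs.1.trans ht.1, ht.2⟩
  have ezp : e z p ≤ V (Icc 0 s) :=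
    hγ0 ▸ eVariationOn.edist_le _ ⟨hs.1, le_rfl⟩ ⟨le_rfl, hs.1⟩
  have ezq : e z q ≤ V (Icc s 1) :=
    hγ1 ▸ eVariationOn.edist_le _ ⟨le_rfl, hs.2⟩ ⟨hs.2, le_rfl⟩
  have epq : e p q ≤ pathLen nrm1 γ := by
    rw [pathLen_nrm1, ← hγ0, ← hγ1]
    exact eVariationOn.edist_le _ ⟨le_rfl, zero_le_one⟩ ⟨zero_le_one, le_rfl⟩
  have hzo : e z o + e z o ≤ e z p + e z q + e p q :=
    calc e z o + e z o ≤ (e z p + e p o) + (e z q + e q o) :=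
          add_le_add (edist_triangle _ _ _) (edist_triangle _ _ _)
      _ = e z p + e z q + (e p o + e o q) := by simp only [e, edist_comm (WithLp.toLp 1 q)]; ring
      _ = e z p + e z q + e p q := by rw [edist_add_edist_of_mem_corners hbox]
  calc geo nrm1 F p o + geo nrm1 F o q
      ≤ (geo nrm1 F p z + geo nrm1 F z o) + (geo nrm1 F o z + geo nrm1 F z q) :=
        add_le_add (geo_triangle _ _ _) (geo_triangle _ _ _)
    _ ≤ (V (Icc 0 s) + e z o) + (e z o + V (Icc s 1)) := by
        rw [geo_comm o z]
        gcongr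
        all_goals exact hC z hz
    _ = (V (Icc 0 s) + V (Icc s 1)) + (e z o + e z o) := by ring
    _ ≤ (V (Icc 0 s) + V (Icc s 1)) + (V (Icc 0 s) + V (Icc s 1) + pathLen nrm1 γ) := by
        exact add_le_add_right (hzo.trans (add_le_add (add_le_add ezp ezq) epq)) _
    _ = 3 * pathLen nrm1 γ := by rw [hV]; ring

end ThreeApprox

section Staircase

variable {d : ℕ}

/-- Parametrizes monotone curves by their `ℓ¹` arc length. -/
def level (z : Pt d) : ℝ := ∑ i, z i

@[simp] lemma level_add (x y : Pt d) : level (x + y) = level x + level y :=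
  Finset.sum_add_distrib

@[simp] lemma level_sub (x y : Pt d) : level (x - y) = level x - level y :=
  Finset.sum_sub_distrib ..

@[simp] lemma level_neg (x : Pt d) : level (-x) = -level x :=
  Finset.sum_neg_distrib ..

@[simp] lemma level_single (i : Fin d) (c : ℝ) : level (Pi.single i c) = c := by
  simp [level]

lemma continuous_level : Continuous (level : Pt d → ℝ) :=
  continuous_finsetSum _ fun i _ => continuous_apply i

lemma dist_toLp_one_of_le {x y : Pt d} (h : x ≤ y) :
    dist (WithLp.toLp 1 x) (WithLp.toLp 1 y) = level y - level x := by
  rw [PiLp.dist_eq_of_L1, level, level, ← Finset.sum_sub_distrib]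
  refine Finset.sum_congr rfl fun i _ => ?_
  rw [PiLp.toLp_apply, PiLp.toLp_apply, Real.dist_eq, abs_sub_comm,
    abs_of_nonneg (sub_nonneg.mpr (h i))]

structure IsStaircase (Ψ : ℝ → Pt d) : Prop where
  monotone : Monotone Ψ
  level_apply : ∀ v, level (Ψ v) = v

namespace IsStaircase

variable {Ψ : ℝ → Pt d} (hΨ : IsStaircase Ψ)
include hΨ

lemma isometry : Isometry fun v => WithLp.toLp 1 (Ψ v) := by
  refine Isometry.of_dist_eq fun a b => ?_
  wlog hab : a ≤ b generalizing a b
  · rw [dist_comm, this b a (le_of_not_ge hab), dist_comm]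
  rw [dist_toLp_one_of_le (hΨ.monotone hab), hΨ.level_apply, hΨ.level_apply, Real.dist_eq,
    abs_sub_comm, abs_of_nonneg (sub_nonneg.mpr hab)]

lemma continuous : Continuous Ψ :=
  (PiLp.continuous_ofLp 1 _).comp hΨ.isometry.continuous

lemma geo_le {F : Set (Pt d)} (hF : ∀ v, Ψ v ∈ F) (a b : ℝ) :
    geo nrm1 F (Ψ a) (Ψ b) ≤ edist (WithLp.toLp 1 (Ψ a)) (WithLp.toLp 1 (Ψ b)) := by
  wlog hab : a ≤ b generalizing a b
  · rw [geo_comm, edist_comm]; exact this b a (le_of_not_ge hab)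
  calc geo nrm1 F (Ψ a) (Ψ b)
      ≤ eVariationOn ((fun v => WithLp.toLp 1 (Ψ v)) ∘ id) (Icc a b) :=
        geo_le_eVariationOn hab hΨ.continuous.continuousOn fun t _ => hF t
    _ ≤ 1 * eVariationOn id (Icc a b) :=
        hΨ.isometry.lipschitz.lipschitzOnWith.comp_eVariationOn_le (mapsTo_id _)
    _ = edist (WithLp.toLp 1 (Ψ a)) (WithLp.toLp 1 (Ψ b)) := by
        rw [one_mul, eVariationOn_id_Icc, hΨ.isometry.edist_eq, edist_dist, Real.dist_eq,
          abs_sub_comm, abs_of_nonneg (sub_nonneg.mpr hab)]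

end IsStaircase

/-- The curve that starts at `w`, performs the moves of `l` (a move `(i, r)` goes a distance `r`
in direction `eᵢ`) and then runs in direction `e_j` forever, parametrized by level; it stays at
`w` below `level w`. -/
noncomputable def walk (j : Fin d) : List (Fin d × ℝ) → Pt d → ℝ → Pt d
  | [], w, v => w + Pi.single j (max (v - level w) 0)
  | (i, r) :: l, w, v =>
      if v ≤ level w + r then w + Pi.single i (max (v - level w) 0)
      else walk j l (w + Pi.single i r) v

section Walk

variable (j : Fin d) {l : List (Fin d × ℝ)} (hl : ∀ m ∈ l, 0 ≤ m.2)
include hl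

lemma walk_of_le_level {w : Pt d} {v : ℝ} (hv : v ≤ level w) : walk j l w v = w := by
  cases l with
  | nil => simp [walk, hv]
  | cons m l =>
    obtain ⟨i, r⟩ := m
    have hr : 0 ≤ r := hl _ List.mem_cons_self
    simp [walk, hv, show v ≤ level w + r by linarith]

lemma level_walk (w : Pt d) (v : ℝ) : level (walk j l w v) = max v (level w) := by
  induction l generalizing w with
  | nil => simp only [walk, level_add, level_single]; grind
  | cons m l ih =>
    obtain ⟨i, r⟩ := m
    have hr : 0 ≤ r := hl _ List.mem_cons_self
    simp only [walk]
    split_ifs with h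
    · simp only [level_add, level_single]; grind
    · rw [ih (fun m hm => hl m (List.mem_cons_of_mem _ hm))]
      simp only [level_add, level_single]; grind

lemma le_walk (w : Pt d) (v : ℝ) : w ≤ walk j l w v := by
  induction l generalizing w with
  | nil => exact le_add_of_nonneg_right (Pi.single_nonneg.mpr (le_max_right _ _))
  | cons m l ih =>
    obtain ⟨i, r⟩ := m
    have hr : 0 ≤ r := hl _ List.mem_cons_self
    simp only [walk]
    split_ifs
    · exact le_add_of_nonneg_right (Pi.single_nonneg.mpr (le_max_right _ _))
    · exact (le_add_of_nonneg_right (Pi.single_nonneg.mpr hr)).trans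
        (ih (fun m hm => hl m (List.mem_cons_of_mem _ hm)) _)

lemma monotone_walk (w : Pt d) : Monotone (walk j l w) := by
  induction l generalizing w with
  | nil => exact fun a b hab =>
      add_le_add le_rfl (Pi.single_le_single.mpr (max_le_max (by linarith) le_rfl))
  | cons m l ih =>
    obtain ⟨i, r⟩ := m
    have hr : 0 ≤ r := hl _ List.mem_cons_self
    have hl' : ∀ m ∈ l, 0 ≤ m.2 := fun m hm => hl m (List.mem_cons_of_mem _ hm)
    intro a b hab
    simp only [walk]
    split_ifs with ha hb hb
    · exact add_le_add le_rfl (Pi.single_le_single.mpr (max_le_max (by linarith) le_rfl))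
    · calc w + Pi.single i (max (a - level w) 0) ≤ w + Pi.single i r :=
            add_le_add le_rfl (Pi.single_le_single.mpr (max_le (by linarith) hr))
        _ ≤ _ := le_walk j hl' _ _
    · linarith
    · exact ih hl' _ hab

end Walk

end Staircase

section Obstacles

variable {d : ℕ} {O : Finset (Set (Pt d))}

lemma IsBox.eq_Icc {B : Set (Pt d)} (h : IsBox B) :
    sInf B ≤ sSup B ∧ B = Icc (sInf B) (sSup B) := by
  obtain ⟨a, b, hab, rfl⟩ := h
  rw [csInf_Icc hab, csSup_Icc hab]
  exact ⟨hab, rfl⟩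

lemma IsBox.mem_iff {B : Set (Pt d)} (h : IsBox B) {z : Pt d} :
    z ∈ B ↔ ∀ i, sInf B i ≤ z i ∧ z i ≤ sSup B i := by
  conv_lhs => rw [h.eq_Icc.2]
  simp only [mem_Icc, Pi.le_def, forall_and]

lemma IsBox.mem_interior_iff {B : Set (Pt d)} (h : IsBox B) {z : Pt d} :
    z ∈ interior B ↔ ∀ i, sInf B i < z i ∧ z i < sSup B i := by
  conv_lhs => rw [h.eq_Icc.2, ← pi_univ_Icc, interior_pi_set finite_univ]
  simp

lemma mem_free_of_mem_of_notMem_interior (hO : IsObstacleFamily O) {B : Set (Pt d)} (hB : B ∈ O)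
    {z : Pt d} (hz : z ∈ B) (hz' : z ∉ interior B) : z ∈ free O := by
  intro B' hB' hzB'
  obtain rfl | hne := eq_or_ne B' B
  · exact hz' hzB'
  · exact disjoint_left.mp (hO.2 hB' hB hne) (interior_subset hzB') hz

lemma free_image (e : Pt d ≃ₜ Pt d) : free (O.image (e '' ·)) = e '' free O := by
  ext x
  simp only [free, mem_ofPred_eq, Finset.forall_mem_image, e.image_eq_preimage_symm,
    ← e.symm.preimage_interior, mem_preimage]

lemma IsObstacleFamily.image (e : Pt d ≃ₜ Pt d) (he : ∀ B, IsBox B → IsBox (e '' B))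
    (hO : IsObstacleFamily O) : IsObstacleFamily (O.image (e '' ·)) := by
  refine ⟨Finset.forall_mem_image.mpr fun B hB => he B (hO.1 B hB), ?_⟩
  rintro _ hB₁' _ hB₂' hne
  obtain ⟨B₁, hB₁, rfl⟩ := Finset.mem_image.mp hB₁'
  obtain ⟨B₂, hB₂, rfl⟩ := Finset.mem_image.mp hB₂'
  exact (disjoint_image_iff e.injective).mpr (hO.2 hB₁ hB₂ fun h => hne (h ▸ rfl))

end Obstacles

section Plane

lemma level_two (z : Pt 2) : level z = z 0 + z 1 := Fin.sum_univ_two _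

lemma eq_of_level_eq_of_snd_eq {x y : Pt 2} (hl : level x = level y) (h1 : x 1 = y 1) :
    x = y := by
  rw [level_two, level_two] at hl
  ext i
  fin_cases i
  · show x 0 = y 0; linarith
  · exact h1

namespace IsStaircase

variable {Ψ : ℝ → Pt 2} (hΨ : IsStaircase Ψ)
include hΨ

lemma apply_zero_add_apply_one (v : ℝ) : Ψ v 0 + Ψ v 1 = v := by
  rw [← level_two, hΨ.level_apply]

variable {o : Pt 2} (ho : Ψ (level o) = o)
include ho

lemma apply_level_snd_le {z : Pt 2} (h0 : z 0 ≤ o 0) (h1 : o 1 ≤ z 1) :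
    Ψ (level z) 1 ≤ z 1 := by
  rcases le_total (level z) (level o) with h | h
  · exact (ho ▸ hΨ.monotone h 1).trans h1
  · linarith [ho ▸ hΨ.monotone h 0, hΨ.apply_zero_add_apply_one (level z), level_two z]

lemma le_apply_level_snd {z : Pt 2} (h0 : o 0 ≤ z 0) (h1 : z 1 ≤ o 1) :
    z 1 ≤ Ψ (level z) 1 := by
  rcases le_total (level z) (level o) with h | h
  · linarith [ho ▸ hΨ.monotone h 0, hΨ.apply_zero_add_apply_one (level z), level_two z]
  · exact h1.trans (ho ▸ hΨ.monotone h 1)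

lemma exists_mem_range_of_path {γ : ℝ → Pt 2} (hγ : ContinuousOn γ (Icc 0 1))
    (h0 : γ 0 0 ≤ o 0 ∧ o 1 ≤ γ 0 1) (h1 : o 0 ≤ γ 1 0 ∧ γ 1 1 ≤ o 1) :
    ∃ s ∈ Icc (0 : ℝ) 1, γ s ∈ range Ψ := by
  set f : ℝ → ℝ := fun t => γ t 1 - Ψ (level (γ t)) 1
  have hf : ContinuousOn f (Icc 0 1) :=
    ((continuous_apply 1).comp_continuousOn hγ).sub
      (((continuous_apply 1).comp (hΨ.continuous.comp continuous_level)).comp_continuousOn hγ)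
  have hf0 : 0 ≤ f 0 := sub_nonneg.mpr (hΨ.apply_level_snd_le ho h0.1 h0.2)
  have hf1 : f 1 ≤ 0 := sub_nonpos.mpr (hΨ.le_apply_level_snd ho h1.1 h1.2)
  obtain ⟨s, hs, hfs⟩ := intermediate_value_Icc' zero_le_one hf ⟨hf1, hf0⟩
  have hsnd : Ψ (level (γ s)) 1 = γ s 1 := by simp only [f] at hfs; linarith
  exact ⟨s, hs, level (γ s), eq_of_level_eq_of_snd_eq (hΨ.level_apply _) hsnd⟩

end IsStaircase

end Plane

section Construction

variable {O : Finset (Set (Pt 2))}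

lemma single_one_apply_zero (c : ℝ) : (Pi.single 1 c : Pt 2) 0 = 0 := by
  simp

lemma single_zero_apply_one (c : ℝ) : (Pi.single 0 c : Pt 2) 1 = 0 := by
  simp

/-- The upward ray from `w` meets `B` in the relative interior of its bottom edge. -/
def Blocks (w : Pt 2) (B : Set (Pt 2)) : Prop :=
  sInf B 0 < w 0 ∧ w 0 < sSup B 0 ∧ w 1 ≤ sInf B 1

lemma add_single_one_mem_free (hO : IsObstacleFamily O) {w : Pt 2} (hw : w ∈ free O) {c : ℝ}
    (hc : 0 ≤ c) (hblock : ∀ B ∈ O, Blocks w B → c ≤ sInf B 1 - w 1) :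
    w + Pi.single 1 c ∈ free O := by
  intro B hB hint
  have hbox := hO.1 B hB
  rw [hbox.mem_interior_iff, Fin.forall_fin_two] at hint
  simp only [Pi.add_apply, Pi.single_eq_same, single_one_apply_zero, add_zero] at hint
  obtain ⟨⟨h0, h0'⟩, ⟨h1, h1'⟩⟩ := hint
  by_cases hw1 : w 1 ≤ sInf B 1
  · have := hblock B hB ⟨h0, h0', hw1⟩
    linarith
  · refine hw B hB ?_
    rw [hbox.mem_interior_iff, Fin.forall_fin_two]
    exact ⟨⟨h0, h0'⟩, ⟨not_le.mp hw1, by linarith⟩⟩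

lemma mem_free_of_mem_bottom_edge (hO : IsObstacleFamily O) {B : Set (Pt 2)} (hB : B ∈ O)
    {z : Pt 2} (h0 : sInf B 0 ≤ z 0) (h0' : z 0 ≤ sSup B 0) (h1 : z 1 = sInf B 1) :
    z ∈ free O := by
  have hbox := hO.1 B hB
  refine mem_free_of_mem_of_notMem_interior hO hB ?_ fun hint => ?_
  · rw [hbox.mem_iff, Fin.forall_fin_two]
    exact ⟨⟨h0, h0'⟩, ⟨h1.ge, h1.trans_le (hbox.eq_Icc.1 1)⟩⟩
  · rw [hbox.mem_interior_iff, Fin.forall_fin_two] at hint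
    exact hint.2.1.ne' h1

/-- `D` is the set of obstacles that the staircase from `w` has not yet passed. -/
lemma exists_walk_mem_free_of_subset (hO : IsObstacleFamily O) (D : Finset (Set (Pt 2)))
    (hD : D ⊆ O) {w : Pt 2} (hw : w ∈ free O) (hpassed : ∀ B ∈ O, B ∉ D → sSup B 0 ≤ w 0) :
    ∃ l : List (Fin 2 × ℝ), (∀ m ∈ l, 0 ≤ m.2) ∧ ∀ v, walk 1 l w v ∈ free O := by
  induction D using Finset.strongInduction generalizing w with
  | H D ih =>
  classical
  have hnotD : ∀ B ∈ O, B ∉ D → ¬Blocks w B := fun B hB hBD hb =>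
    (hpassed B hB hBD).not_gt hb.2.1
  by_cases hblk : ∃ B ∈ D, Blocks w B
  swap
  · refine ⟨[], by simp, fun v => add_single_one_mem_free hO hw (le_max_right _ _)
      fun B hB hb => ?_⟩
    by_cases hBD : B ∈ D
    · exact absurd ⟨B, hBD, hb⟩ hblk
    · exact absurd hb (hnotD B hB hBD)
  -- climb to the lowest blocking obstacle `B`, then slide east along its bottom edge
  obtain ⟨B, hB, hmin⟩ := (D.filter (Blocks w)).exists_min_image (fun B => sInf B 1)
    (by obtain ⟨B, hB, hb⟩ := hblk; exact ⟨B, Finset.mem_filter.mpr ⟨hB, hb⟩⟩)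
  obtain ⟨hBD, hb0, hb0', hb1⟩ := Finset.mem_filter.mp hB
  set δ₁ := sInf B 1 - w 1 with hδ₁
  set δ₂ := sSup B 0 - w 0 with hδ₂
  have hup : ∀ c, 0 ≤ c → c ≤ δ₁ → w + Pi.single 1 c ∈ free O := fun c hc hcδ =>
    add_single_one_mem_free hO hw hc fun B' hB' hb' => by
      by_cases hB'D : B' ∈ D
      · have := hmin B' (Finset.mem_filter.mpr ⟨hB'D, hb'⟩); linarith
      · exact absurd hb' (hnotD B' hB' hB'D)
  have hslide : ∀ c, 0 ≤ c → c ≤ δ₂ → w + Pi.single 1 δ₁ + Pi.single 0 c ∈ free O := by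
    intro c hc hcδ
    refine mem_free_of_mem_bottom_edge hO (hD hBD) ?_ ?_ ?_ <;>
      simp only [Pi.add_apply, Pi.single_eq_same, single_one_apply_zero,
        single_zero_apply_one, add_zero] <;> linarith
  have hpassed' : ∀ B' ∈ O, B' ∉ D.erase B →
      sSup B' 0 ≤ (w + Pi.single 1 δ₁ + Pi.single 0 δ₂ : Pt 2) 0 := by
    intro B' hB' hB'D
    simp only [Pi.add_apply, Pi.single_eq_same, single_one_apply_zero, add_zero]
    by_cases h : B' = B
    · rw [h]; linarith
    · exact (hpassed B' hB' fun h' => hB'D (Finset.mem_erase.mpr ⟨h, h'⟩)).trans (by linarith)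
  obtain ⟨l, hl, hfree⟩ := ih (D.erase B) (Finset.erase_ssubset hBD)
    ((D.erase_subset B).trans hD) (hslide δ₂ (by linarith) le_rfl) hpassed'
  refine ⟨(1, δ₁) :: (0, δ₂) :: l, ?_, fun v => ?_⟩
  · simp only [List.mem_cons, forall_eq_or_imp]
    exact ⟨by linarith, by linarith, hl⟩
  · simp only [walk]
    split_ifs with h₁ h₂
    · exact hup _ (le_max_right _ _) (max_le (by linarith) (by linarith))
    · exact hslide _ (le_max_right _ _) (max_le (by linarith) (by linarith))
    · exact hfree v

lemma exists_walk_mem_free (hO : IsObstacleFamily O) {w : Pt 2} (hw : w ∈ free O) :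
    ∃ l : List (Fin 2 × ℝ), (∀ m ∈ l, 0 ≤ m.2) ∧ ∀ v, walk 1 l w v ∈ free O :=
  exists_walk_mem_free_of_subset hO O subset_rfl hw fun _ hB hBO => absurd hB hBO

lemma isBox_image_neg {d : ℕ} {B : Set (Pt d)} (h : IsBox B) :
    IsBox (Homeomorph.neg (Pt d) '' B) := by
  obtain ⟨a, b, hab, rfl⟩ := h
  exact ⟨-b, -a, neg_le_neg hab, by simp⟩

/-- The walk `Ψ⁺` from `o` is constant below `level o`, and the walk `Ψ⁻` from `-o` amid the
reflected obstacles is constant below `-level o`, so `Ψ⁺ v - Ψ⁻ (-v) - o` glues `Ψ⁺` above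
`level o` to the point reflection of `Ψ⁻` below it. -/
theorem exists_staircase (hO : IsObstacleFamily O) {o : Pt 2} (ho : o ∈ free O) :
    ∃ Ψ : ℝ → Pt 2, IsStaircase Ψ ∧ Ψ (level o) = o ∧ ∀ v, Ψ v ∈ free O := by
  set e := Homeomorph.neg (Pt 2)
  have hfree : ∀ x, x ∈ free (O.image (e '' ·)) ↔ -x ∈ free O := fun x => by
    rw [free_image]; simp [e]
  obtain ⟨l₁, hl₁, hfree₁⟩ := exists_walk_mem_free hO ho
  obtain ⟨l₂, hl₂, hfree₂⟩ := exists_walk_mem_free (hO.image e fun _ => isBox_image_neg)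
    ((hfree (-o)).mpr (by simpa using ho))
  have hup : ∀ v ≤ level o, walk 1 l₁ o v = o := fun v hv => walk_of_le_level 1 hl₁ hv
  have hdown : ∀ v, level o ≤ v → walk 1 l₂ (-o) (-v) = -o := fun v hv =>
    walk_of_le_level 1 hl₂ (by simpa using hv)
  refine ⟨fun v => walk 1 l₁ o v - walk 1 l₂ (-o) (-v) - o, ⟨fun a b hab => ?_, fun v => ?_⟩,
    ?_, fun v => ?_⟩
  · exact sub_le_sub_right (sub_le_sub (monotone_walk 1 hl₁ o hab)
      (monotone_walk 1 hl₂ (-o) (neg_le_neg hab))) o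
  · simp only [level_sub, level_walk 1 hl₁, level_walk 1 hl₂, level_neg]
    rcases le_total v (level o) with h | h
    · rw [max_eq_right h, max_eq_left (neg_le_neg h)]; ring
    · rw [max_eq_left h, max_eq_right (neg_le_neg h)]; ring
  · simp [hup _ le_rfl, hdown _ le_rfl]
  · rcases le_total v (level o) with hv | hv
    · simpa [hup v hv, hfree] using hfree₂ (-v)
    · simpa [hdown v hv] using hfree₁ v

end Construction

section Main

def reflectSnd : Pt 2 ≃ₜ Pt 2 where
  toFun z := ![z 0, -z 1]
  invFun z := ![z 0, -z 1]
  left_inv z := by ext i; fin_cases i <;> simp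
  right_inv z := by ext i; fin_cases i <;> simp
  continuous_toFun := continuous_pi fun i => by fin_cases i <;> simp <;> fun_prop
  continuous_invFun := continuous_pi fun i => by fin_cases i <;> simp <;> fun_prop

@[simp] lemma reflectSnd_apply_zero (z : Pt 2) : reflectSnd z 0 = z 0 := rfl

@[simp] lemma reflectSnd_apply_one (z : Pt 2) : reflectSnd z 1 = -z 1 := rfl

@[simp] lemma reflectSnd_symm : reflectSnd.symm = reflectSnd := rfl

lemma nrm1_reflectSnd_sub (x y : Pt 2) :
    nrm1 (reflectSnd x - reflectSnd y) = nrm1 (x - y) := by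
  simp only [nrm1, Fin.sum_univ_two, Pi.sub_apply, reflectSnd_apply_zero, reflectSnd_apply_one,
    neg_sub_neg, abs_sub_comm (y 1)]

lemma isBox_image_reflectSnd {B : Set (Pt 2)} (h : IsBox B) : IsBox (reflectSnd '' B) := by
  obtain ⟨a, b, hab, rfl⟩ := h
  refine ⟨reflectSnd ![a 0, b 1], reflectSnd ![b 0, a 1], ?_, ?_⟩
  · simp [Pi.le_def, Fin.forall_fin_two, hab 0, hab 1]
  · ext z
    simp only [reflectSnd.image_eq_preimage_symm, reflectSnd_symm, mem_preimage, mem_Icc,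
      Pi.le_def, Fin.forall_fin_two, reflectSnd_apply_zero, reflectSnd_apply_one]
    simp only [Matrix.cons_val_zero, Matrix.cons_val_one, Matrix.cons_val_fin_one, le_neg, neg_le]
    tauto

lemma reflectSnd_mem_corners {p q o : Pt 2} (h : o ∈ corners p q) :
    reflectSnd o ∈ corners (reflectSnd p) (reflectSnd q) := by
  simp only [corners, ← pi_univ_uIcc, mem_univ_pi, Fin.forall_fin_two, reflectSnd_apply_zero,
    reflectSnd_apply_one, mem_uIcc, neg_le_neg_iff] at h ⊢
  tauto

theorem geo_add_geo_le_of_antidiagonal {O : Finset (Set (Pt 2))} (hO : IsObstacleFamily O)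
    {p q o : Pt 2} (ho : o ∈ free O) (hbox : o ∈ corners p q) (h0 : p 0 ≤ q 0)
    (h1 : q 1 ≤ p 1) :
    geo nrm1 (free O) p o + geo nrm1 (free O) o q ≤ 3 * geo nrm1 (free O) p q := by
  have hc : ∀ i, o i ∈ uIcc (p i) (q i) := by
    rw [corners, ← pi_univ_uIcc] at hbox
    exact fun i => hbox i (mem_univ i)
  obtain ⟨hpo, hoq⟩ : p 0 ≤ o 0 ∧ o 0 ≤ q 0 := by simpa [uIcc_of_le h0] using hc 0
  obtain ⟨hqo, hop⟩ : q 1 ≤ o 1 ∧ o 1 ≤ p 1 := by simpa [uIcc_of_ge h1] using hc 1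
  obtain ⟨Ψ, hΨ, hΨo, hΨF⟩ := exists_staircase hO ho
  refine geo_add_geo_le_of_forall_path_meets (range Ψ) hbox ?_ fun γ hγ => ?_
  · rintro _ ⟨a, rfl⟩
    exact hΨo ▸ hΨ.geo_le hΨF a (level o)
  · obtain ⟨hcont, hγ0, hγ1, -⟩ := hγ
    exact hΨ.exists_mem_range_of_path hΨo hcont (hγ0 ▸ ⟨hpo, hop⟩) (hγ1 ▸ ⟨hoq, hqo⟩)

end Main

theorem statement_4_general (O : Finset (Set (Pt 2))) (hO : IsObstacleFamily O)
    (p q o : Pt 2) (ho : o ∈ free O)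
    (hbox : o ∈ corners p q) :
    geo nrm1 (free O) p o + geo nrm1 (free O) o q ≤ 3 * geo nrm1 (free O) p q := by
  wlog h0 : p 0 ≤ q 0 generalizing p q
  · rw [geo_comm p o, geo_comm o q, geo_comm p q, add_comm]
    exact this q p (by rwa [corners, uIcc_comm]) (le_of_not_ge h0)
  rcases le_total (q 1) (p 1) with h1 | h1
  · exact geo_add_geo_le_of_antidiagonal hO ho hbox h0 h1
  · have key := geo_add_geo_le_of_antidiagonal
      (hO.image reflectSnd fun _ => isBox_image_reflectSnd)
      (by rw [free_image]; exact mem_image_of_mem _ ho) (reflectSnd_mem_corners hbox)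
      (by simpa using h0) (by simpa using h1)
    simpa only [free_image, geo_image reflectSnd nrm1_reflectSnd_sub] using key

/-- in ℝ² amid disjoint axis-parallel rectangle obstacles, for any
o ∈ B(p,q) outside all obstacle interiors, σ₁(p,o) + σ₁(o,q) ≤ 3·σ₁(p,q). -/
theorem statement_4 (O : Finset (Set (Pt 2))) (hO : IsObstacleFamily O)
    (p q o : Pt 2) (hp : p ∈ free O) (hq : q ∈ free O) (ho : o ∈ free O)
    (hbox : o ∈ corners p q) :
    geo nrm1 (free O) p o + geo nrm1 (free O) o q ≤ 3 * geo nrm1 (free O) p q :=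
  statement_4_general O hO p q o ho hbox

end GeoSpanner
end

section
/- Let 𝒪 be a finite family of pairwise disjoint closed axis-parallel rectangles in ℝ² (obstacles). Let p, q ∈ ℝ² lie outside the interior of every obstacle, and let o be a point of B(p,q) outside the interior of every obstacle. Then for every continuous path γ : [0,1] → ℝ² from p to q whose image is disjoint from the interior of every obstacle and whose L1-length (total variation with respect to the L1 norm) equals L < ∞, there exists a point r in the image of γ such that σ₁(o,r) ≤ L, where σ₁ denotes the L1-geodesic distance amid the obstacles. -/
open scoped ENNReal

namespace GeoSpanner

/-!
Reflecting coordinates we may assume `p ≤ q`. Through `o` runs a staircase in the free space,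
monotone from the upper left to the lower right: go up from `o` until an obstacle is hit, slide
left along its bottom edge to its corner, and repeat; symmetrically downwards. It separates `p`
from `q`, so `γ` meets it at some `r`. The piece of staircase from `o` to `r` is monotone in
both coordinates, so `σ₁(o, r) ≤ ‖r - o‖₁`, and as `o ∈ B(p, q)`,
`‖r - o‖₁ ≤ ‖r - p‖₁ + ‖q - r‖₁ ≤ L`.
-/

section General

variable {d : ℕ}

lemma nrm1_nonneg (x : Pt d) : 0 ≤ nrm1 x :=
  Finset.sum_nonneg fun i _ => abs_nonneg (x i)

lemma nrm1_sub_le_of_mem_corners {p q o : Pt d} (ho : o ∈ corners p q) (r : Pt d) :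
    nrm1 (r - o) ≤ nrm1 (r - p) + nrm1 (q - r) := by
  rw [nrm1, nrm1, nrm1, ← Finset.sum_add_distrib]
  refine Finset.sum_le_sum fun i _ => ?_
  have hi : o i ∈ Set.uIcc (p i) (q i) := ⟨ho.1 i, ho.2 i⟩
  simp only [Pi.sub_apply]
  rcases Set.mem_uIcc.1 hi with ⟨h₁, h₂⟩ | ⟨h₁, h₂⟩ <;>
    cases abs_cases (r i - o i) <;> cases abs_cases (r i - p i) <;> cases abs_cases (q i - r i) <;>
    linarith

lemma sum_fin_succ_sub_castSucc (n : ℕ) (f : Fin (n + 1) → ℝ) :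
    ∑ i : Fin n, (f i.succ - f i.castSucc) = f (Fin.last n) - f 0 := by
  induction n with
  | zero => simp
  | succ n ih =>
    rw [Fin.sum_univ_castSucc]
    have h := ih (fun i => f i.castSucc)
    simp only [Fin.succ_castSucc] at h ⊢
    rw [h]
    simp [Fin.succ_last]

lemma ofReal_nrm_add_le_pathLen (nrm : Pt d → ℝ) (γ : ℝ → Pt d) {t : ℝ}
    (ht : t ∈ Set.Icc (0 : ℝ) 1) :
    ENNReal.ofReal (nrm (γ t - γ 0)) + ENNReal.ofReal (nrm (γ 1 - γ t)) ≤ pathLen nrm γ := by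
  refine le_iSup_of_le 2 <| le_iSup_of_le ![0, t, 1] <| le_iSup_of_le ⟨?_, ?_⟩ ?_
  · exact Fin.monotone_iff_le_succ.2 fun i => by fin_cases i <;> simp [ht.1, ht.2]
  · intro i; fin_cases i <;> simp [ht.1, ht.2]
  · simp [Fin.sum_univ_two]

lemma sum_abs_sub_le_of_monotone {f : ℝ → ℝ} (hf : Monotone f) {n : ℕ} {t : Fin (n + 1) → ℝ}
    (ht : Monotone t) {a b : ℝ} (htab : ∀ k, t k ∈ Set.Icc a b) :
    ∑ k : Fin n, |f (t k.succ) - f (t k.castSucc)| ≤ f b - f a := by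
  have hstep (k : Fin n) : 0 ≤ f (t k.succ) - f (t k.castSucc) :=
    sub_nonneg.2 (hf (ht (Fin.castSucc_le_succ k)))
  rw [Finset.sum_congr rfl fun k _ => abs_of_nonneg (hstep k),
    sum_fin_succ_sub_castSucc n (fun k => f (t k))]
  linarith [hf (htab (Fin.last n)).2, hf (htab 0).1]

lemma sum_abs_sub_le_of_monotone_or_antitone {f : ℝ → ℝ} (hf : Monotone f ∨ Antitone f) {n : ℕ}
    {t : Fin (n + 1) → ℝ} (ht : Monotone t) {a b : ℝ} (htab : ∀ k, t k ∈ Set.Icc a b) :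
    ∑ k : Fin n, |f (t k.succ) - f (t k.castSucc)| ≤ |f b - f a| := by
  rcases hf with hf | hf
  · exact (sum_abs_sub_le_of_monotone hf ht htab).trans (le_abs_self _)
  · have h := sum_abs_sub_le_of_monotone hf.neg ht htab
    simp only [neg_sub_neg] at h
    calc ∑ k : Fin n, |f (t k.succ) - f (t k.castSucc)|
        = ∑ k : Fin n, |f (t k.castSucc) - f (t k.succ)| :=
          Finset.sum_congr rfl fun k _ => abs_sub_comm _ _
      _ ≤ f a - f b := h
      _ ≤ |f b - f a| := by rw [abs_sub_comm]; exact le_abs_self _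

lemma pathLen_nrm1_le_of_monotone_or_antitone (η : ℝ → Pt d)
    (hη : ∀ i, Monotone (fun s => η s i) ∨ Antitone (fun s => η s i)) :
    pathLen nrm1 η ≤ ENNReal.ofReal (nrm1 (η 1 - η 0)) := by
  refine iSup_le fun n => iSup_le fun t => iSup_le fun ⟨ht, htI⟩ => ?_
  rw [← ENNReal.ofReal_sum_of_nonneg fun k _ => nrm1_nonneg _]
  refine ENNReal.ofReal_le_ofReal ?_
  simp only [nrm1, Pi.sub_apply]
  rw [Finset.sum_comm]
  exact Finset.sum_le_sum fun i _ => sum_abs_sub_le_of_monotone_or_antitone (hη i) ht htI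

end General

section Obstacles

variable {d : ℕ}

lemma mem_interior_Icc_iff {a b x : Pt d} :
    x ∈ interior (Set.Icc a b) ↔ ∀ i, a i < x i ∧ x i < b i := by
  rw [← Set.pi_univ_Icc, interior_pi_set Set.finite_univ]
  simp [Set.mem_pi, Set.mem_Ioo]

lemma IsObstacleFamily.subset {O O' : Finset (Set (Pt d))} (hO : IsObstacleFamily O)
    (h : O' ⊆ O) : IsObstacleFamily O' :=
  ⟨fun B hB => hO.1 B (h hB), hO.2.mono (Finset.coe_subset.2 h)⟩

lemma free_subset_free {O O' : Finset (Set (Pt d))} (h : O' ⊆ O) : free O ⊆ free O' :=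
  fun _ hx B hB => hx B (h hB)

lemma mem_free_of_mem_free_erase {O : Finset (Set (Pt d))} {B : Set (Pt d)} {x : Pt d}
    (hx : x ∈ free (O.erase B)) (hxB : x ∉ interior B) : x ∈ free O := by
  intro B' hB'
  by_cases h : B' = B
  · exact h ▸ hxB
  · exact hx B' (Finset.mem_erase.2 ⟨h, hB'⟩)

lemma IsObstacleFamily.mem_free_of_mem {O : Finset (Set (Pt d))} (hO : IsObstacleFamily O)
    {B : Set (Pt d)} (hB : B ∈ O) {x : Pt d} (hxB : x ∈ B) (hx : x ∉ interior B) :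
    x ∈ free O := by
  intro B' hB' hxB'
  by_cases h : B' = B
  · exact hx (h ▸ hxB')
  · exact Set.disjoint_left.1 (hO.2 hB' hB h) (interior_subset hxB') hxB

open Classical in
lemma IsObstacleFamily.image_preimage {O : Finset (Set (Pt d))} (hO : IsObstacleFamily O)
    (σ : Pt d ≃ₜ Pt d) (hσ : ∀ B, IsBox B → IsBox (σ ⁻¹' B)) :
    IsObstacleFamily (O.image (σ ⁻¹' ·)) := by
  refine ⟨fun B hB => ?_, fun B₁ hB₁ B₂ hB₂ hne => ?_⟩
  · obtain ⟨B₀, hB₀, rfl⟩ := Finset.mem_image.1 hB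
    exact hσ B₀ (hO.1 B₀ hB₀)
  · obtain ⟨C₁, hC₁, rfl⟩ := Finset.mem_image.1 hB₁
    obtain ⟨C₂, hC₂, rfl⟩ := Finset.mem_image.1 hB₂
    exact (hO.2 hC₁ hC₂ fun h => hne (by rw [h])).preimage σ

open Classical in
lemma free_image_preimage (O : Finset (Set (Pt d))) (σ : Pt d ≃ₜ Pt d) :
    free (O.image (σ ⁻¹' ·)) = σ ⁻¹' free O := by
  ext x
  simp [free, ← σ.preimage_interior]

lemma isBox_preimage_neg {B : Set (Pt d)} (hB : IsBox B) : IsBox (Neg.neg ⁻¹' B) := by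
  obtain ⟨a, b, hab, rfl⟩ := hB
  exact ⟨-b, -a, neg_le_neg hab, by ext x; simp [Set.mem_Icc, and_comm]⟩

end Obstacles

section Transport

variable {d : ℕ}

lemma pathLen_comp {nrm : Pt d → ℝ} {f : Pt d → Pt d} (hf : ∀ x y, nrm (f x - f y) = nrm (x - y))
    (γ : ℝ → Pt d) : pathLen nrm (f ∘ γ) = pathLen nrm γ := by
  simp only [pathLen, Function.comp_apply, hf]

lemma IsPathIn.comp {F G : Set (Pt d)} {p q : Pt d} {γ : ℝ → Pt d} (hγ : IsPathIn F p q γ)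
    {f : Pt d → Pt d} (hf : Continuous f) (hFG : Set.MapsTo f F G) :
    IsPathIn G (f p) (f q) (f ∘ γ) :=
  ⟨hf.comp_continuousOn hγ.1, by simp [hγ.2.1], by simp [hγ.2.2.1],
    fun t ht => hFG (hγ.2.2.2 t ht)⟩

lemma geo_le_geo_preimage {nrm : Pt d → ℝ} {f : Pt d → Pt d} (hfc : Continuous f)
    (hf : ∀ x y, nrm (f x - f y) = nrm (x - y)) (F : Set (Pt d)) (x y : Pt d) :
    geo nrm F (f x) (f y) ≤ geo nrm (f ⁻¹' F) x y :=
  le_iInf₂ fun η hη => pathLen_comp hf η ▸ iInf₂_le (f ∘ η) (hη.comp hfc (Set.mapsTo_preimage f F))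

def signFlip (e : Pt d) (he : e * e = 1) : Pt d ≃ₜ Pt d where
  toFun x := e * x
  invFun x := e * x
  left_inv x := by simp [← mul_assoc, he]
  right_inv x := by simp [← mul_assoc, he]
  continuous_toFun := by fun_prop
  continuous_invFun := by fun_prop

@[simp]
lemma signFlip_apply {e : Pt d} (he : e * e = 1) (x : Pt d) : signFlip e he x = e * x := rfl

lemma signFlip_signFlip {e : Pt d} (he : e * e = 1) (x : Pt d) :
    signFlip e he (signFlip e he x) = x :=
  (signFlip e he).symm_apply_apply x

lemma nrm1_signFlip_sub {e : Pt d} (he : e * e = 1) (x y : Pt d) :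
    nrm1 (signFlip e he x - signFlip e he y) = nrm1 (x - y) := by
  refine Finset.sum_congr rfl fun i _ => ?_
  rcases mul_self_eq_one_iff.1 (congrFun he i) with h | h
  · simp [h]
  · simp [h, neg_add_eq_sub, abs_sub_comm]

lemma isBox_preimage_signFlip {e : Pt d} (he : e * e = 1) {B : Set (Pt d)} (hB : IsBox B) :
    IsBox (signFlip e he ⁻¹' B) := by
  obtain ⟨a, b, hab, rfl⟩ := hB
  refine ⟨e * a ⊓ e * b, e * a ⊔ e * b, inf_le_sup, Set.ext fun x => ?_⟩
  simp only [Set.mem_preimage, Set.mem_Icc, Pi.le_def, ← forall_and]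
  refine forall_congr' fun i => ?_
  rcases mul_self_eq_one_iff.1 (congrFun he i) with h | h
  · simp [h, hab i]
  · simp [h, (neg_le_neg (hab i))]
    constructor <;> rintro ⟨h₁, h₂⟩ <;> constructor <;> linarith

end Transport

section Staircase

structure IsUpLeftArm (F : Set (Pt 2)) (a : Pt 2) (u : ℝ → Pt 2) : Prop where
  continuous : Continuous u
  eq_of_nonpos : ∀ s ≤ 0, u s = a
  mem : ∀ s, u s ∈ F
  snd_sub_fst : ∀ s, 0 ≤ s → u s 1 - u s 0 = a 1 - a 0 + s
  antitone_fst : Antitone fun s => u s 0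
  monotone_snd : Monotone fun s => u s 1

lemma IsUpLeftArm.fst_le {F : Set (Pt 2)} {a : Pt 2} {u : ℝ → Pt 2} (hu : IsUpLeftArm F a u)
    (s : ℝ) : u s 0 ≤ a 0 := by
  rcases le_total s 0 with hs | hs
  · rw [hu.eq_of_nonpos s hs]
  · simpa [hu.eq_of_nonpos 0 le_rfl] using hu.antitone_fst hs

lemma isUpLeftArm_vertical {F : Set (Pt 2)} {a : Pt 2} (h : ∀ y, a 1 ≤ y → ![a 0, y] ∈ F) :
    IsUpLeftArm F a fun s => ![a 0, a 1 + max s 0] where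
  continuous := by fun_prop
  eq_of_nonpos s hs := by ext i; fin_cases i <;> simp [hs]
  mem s := h _ (by simp)
  snd_sub_fst s hs := by
    simp only [Matrix.cons_val_one, Matrix.cons_val_fin_one, Matrix.cons_val_zero, max_eq_left hs]
    ring
  antitone_fst _ _ _ := by simp
  monotone_snd s t hst := by simpa using max_le_max hst le_rfl

/-- Up from `a` to height `b 1`, then left to `b`. -/
def cornerPath (a b : Pt 2) (s : ℝ) : Pt 2 :=
  ![max (b 0) (a 0 - max (s - (b 1 - a 1)) 0), min (a 1 + max s 0) (b 1)]

lemma cornerPath_of_le {a b : Pt 2} (hba : b 0 ≤ a 0) (hab : a 1 ≤ b 1) {s : ℝ}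
    (hs : s ≤ b 1 - a 1) : cornerPath a b s = ![a 0, a 1 + max s 0] := by
  have h : a 1 + max s 0 ≤ b 1 := by linarith [max_le hs (sub_nonneg.2 hab)]
  ext i; fin_cases i <;> simp [cornerPath, hba, h, hs]

lemma cornerPath_of_ge {a b : Pt 2} (hab : a 1 ≤ b 1) {s : ℝ} (hs : b 1 - a 1 ≤ s) :
    cornerPath a b s = ![max (b 0) (a 0 - (s - (b 1 - a 1))), b 1] := by
  have hs0 : 0 ≤ s := (sub_nonneg.2 hab).trans hs
  have h : b 1 ≤ a 1 + s := by linarith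
  ext i; fin_cases i <;> simp [cornerPath, hs, hs0, h]

lemma cornerPath_of_nonpos {a b : Pt 2} (hba : b 0 ≤ a 0) (hab : a 1 ≤ b 1) {s : ℝ}
    (hs : s ≤ 0) : cornerPath a b s = a := by
  rw [cornerPath_of_le hba hab (by linarith)]
  ext i; fin_cases i <;> simp [hs]

lemma cornerPath_of_length_le {a b : Pt 2} (hba : b 0 ≤ a 0) (hab : a 1 ≤ b 1) {s : ℝ}
    (hs : b 1 - a 1 + (a 0 - b 0) ≤ s) : cornerPath a b s = b := by
  rw [cornerPath_of_ge hab (by linarith)]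
  ext i; fin_cases i <;> simp [show a 0 - (s - (b 1 - a 1)) ≤ b 0 by linarith]

lemma continuous_cornerPath (a b : Pt 2) : Continuous (cornerPath a b) := by
  unfold cornerPath; fun_prop

lemma antitone_cornerPath_fst (a b : Pt 2) : Antitone fun s => cornerPath a b s 0 :=
  fun _ _ hst => by simp only [cornerPath, Matrix.cons_val_zero]; gcongr

lemma monotone_cornerPath_snd (a b : Pt 2) : Monotone fun s => cornerPath a b s 1 :=
  fun _ _ hst => by simp only [cornerPath, Matrix.cons_val_one, Matrix.cons_val_fin_one]; gcongr

lemma cornerPath_snd_sub_fst {a b : Pt 2} (hba : b 0 ≤ a 0) (hab : a 1 ≤ b 1) {s : ℝ}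
    (hs : 0 ≤ s) (hsT : s ≤ b 1 - a 1 + (a 0 - b 0)) :
    cornerPath a b s 1 - cornerPath a b s 0 = a 1 - a 0 + s := by
  rcases le_total s (b 1 - a 1) with h | h
  · simp only [cornerPath_of_le hba hab h, Matrix.cons_val_one, Matrix.cons_val_fin_one,
      Matrix.cons_val_zero, max_eq_left hs]
    ring
  · simp only [cornerPath_of_ge hab h, Matrix.cons_val_one, Matrix.cons_val_fin_one,
      Matrix.cons_val_zero, max_eq_right (show b 0 ≤ a 0 - (s - (b 1 - a 1)) by linarith)]
    ring

lemma cornerPath_mem {F : Set (Pt 2)} {a b : Pt 2} (hba : b 0 ≤ a 0) (hab : a 1 ≤ b 1)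
    (hvert : ∀ y ∈ Set.Icc (a 1) (b 1), ![a 0, y] ∈ F)
    (hhor : ∀ x ∈ Set.Icc (b 0) (a 0), ![x, b 1] ∈ F) (s : ℝ) : cornerPath a b s ∈ F := by
  rcases le_total s (b 1 - a 1) with h | h
  · rw [cornerPath_of_le hba hab h]
    exact hvert _ ⟨by simp, by linarith [max_le h (sub_nonneg.2 hab)]⟩
  · rw [cornerPath_of_ge hab h]
    exact hhor _ ⟨le_max_left _ _, max_le hba (by linarith)⟩

lemma IsUpLeftArm.elbow {F : Set (Pt 2)} {a b : Pt 2} {u : ℝ → Pt 2} (hu : IsUpLeftArm F b u)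
    (hba : b 0 ≤ a 0) (hab : a 1 ≤ b 1) (hvert : ∀ y ∈ Set.Icc (a 1) (b 1), ![a 0, y] ∈ F)
    (hhor : ∀ x ∈ Set.Icc (b 0) (a 0), ![x, b 1] ∈ F) :
    IsUpLeftArm F a fun s => cornerPath a b s + u (s - (b 1 - a 1 + (a 0 - b 0))) - b := by
  set T := b 1 - a 1 + (a 0 - b 0)
  have h_before (s) (hs : s ≤ T) : cornerPath a b s + u (s - T) - b = cornerPath a b s := by
    rw [hu.eq_of_nonpos _ (by linarith), add_sub_cancel_right]
  have h_after (s) (hs : T ≤ s) : cornerPath a b s + u (s - T) - b = u (s - T) := by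
    rw [cornerPath_of_length_le hba hab hs, add_sub_cancel_left]
  refine ⟨?_, fun s hs => ?_, fun s => ?_, fun s hs => ?_, fun s t hst => ?_, fun s t hst => ?_⟩
  · have := hu.continuous
    have := continuous_cornerPath a b
    fun_prop
  · rw [h_before s (by linarith), cornerPath_of_nonpos hba hab hs]
  · rcases le_total s T with h | h
    · rw [h_before s h]; exact cornerPath_mem hba hab hvert hhor s
    · rw [h_after s h]; exact hu.mem _
  · rcases le_total s T with h | h
    · rw [h_before s h]; exact cornerPath_snd_sub_fst hba hab hs h
    · rw [h_after s h, hu.snd_sub_fst _ (by linarith)]; ring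
  · simp only [Pi.add_apply, Pi.sub_apply]
    linarith [antitone_cornerPath_fst a b hst, hu.antitone_fst (sub_le_sub_right hst T)]
  · simp only [Pi.add_apply, Pi.sub_apply]
    linarith [monotone_cornerPath_snd a b hst, hu.monotone_snd (sub_le_sub_right hst T)]

lemma IsObstacleFamily.exists_isUpLeftArm_of_blocked {O : Finset (Set (Pt 2))}
    (hO : IsObstacleFamily O) {a b c : Pt 2} (ha : a ∈ free O) {B : Set (Pt 2)} (hBO : B ∈ O)
    (hB : B = Set.Icc b c) {y : ℝ} (hy : a 1 ≤ y) (hyB : ![a 0, y] ∈ interior B)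
    (hvert : ∀ y ∈ Set.Icc (a 1) (b 1), ![a 0, y] ∈ free O)
    (harm : b ∈ free (O.erase B) → ∃ u, IsUpLeftArm (free (O.erase B)) b u) :
    ∃ u, IsUpLeftArm (free O) a u := by
  subst hB
  rw [mem_interior_Icc_iff] at hyB
  have hba : b 0 < a 0 := by simpa using (hyB 0).1
  have hab : a 1 ≤ b 1 := by
    by_contra! h
    refine ha _ hBO (mem_interior_Icc_iff.2 fun i => ?_)
    fin_cases i
    · simpa using hyB 0
    · exact ⟨h, by simpa using hy.trans_lt (hyB 1).2⟩
  have hhor : ∀ x ∈ Set.Icc (b 0) (a 0), ![x, b 1] ∈ free O := by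
    intro x hx
    refine hO.mem_free_of_mem hBO ⟨fun i => ?_, fun i => ?_⟩
      (fun h => lt_irrefl _ (mem_interior_Icc_iff.1 h 1).1) <;> fin_cases i
    · simpa using hx.1
    · simp
    · simpa using hx.2.trans (hyB 0).2.le
    · simpa using ((hyB 1).1.trans (hyB 1).2).le
  have hb : b ∈ free (O.erase (Set.Icc b c)) := by
    refine free_subset_free (O.erase_subset _) ?_
    convert hhor (b 0) ⟨le_rfl, hba.le⟩
    ext i; fin_cases i <;> rfl
  obtain ⟨u, hu⟩ := harm hb
  have hu' : IsUpLeftArm (free O) b u :=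
    { hu with
      mem := fun s => mem_free_of_mem_free_erase (hu.mem s) fun h =>
        (mem_interior_Icc_iff.1 h 0).1.not_ge (hu.fst_le s) }
  exact ⟨_, hu'.elbow hba.le hab hvert hhor⟩

theorem exists_isUpLeftArm {O : Finset (Set (Pt 2))} (hO : IsObstacleFamily O) {a : Pt 2}
    (ha : a ∈ free O) : ∃ u, IsUpLeftArm (free O) a u := by
  induction O using Finset.strongInduction generalizing a with
  | H O ih =>
  by_cases hblocked : ∃ B ∈ O, ∃ y, a 1 ≤ y ∧ ![a 0, y] ∈ interior B
  swap
  · push Not at hblocked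
    exact ⟨_, isUpLeftArm_vertical fun y hy B hB => hblocked B hB y hy⟩
  classical
  choose! lo hi _ hbox using hO.1
  -- the first obstacle met by the upward ray from `a`
  obtain ⟨B, hB, hBmin⟩ := Finset.exists_min_image
    (O.filter fun B => ∃ y, a 1 ≤ y ∧ ![a 0, y] ∈ interior B) (fun B => lo B 1)
    (by obtain ⟨B, hB, h⟩ := hblocked; exact ⟨B, Finset.mem_filter.2 ⟨hB, h⟩⟩)
  obtain ⟨hBO, y, hy, hyB⟩ := Finset.mem_filter.1 hB
  refine hO.exists_isUpLeftArm_of_blocked ha hBO (hbox B hBO) hy hyB ?_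
    fun hb => ih _ (Finset.erase_ssubset hBO) (hO.subset (O.erase_subset B)) hb
  intro y' hy' B' hB' hyB'
  have hmin := hBmin B' (Finset.mem_filter.2 ⟨hB', y', hy'.1, hyB'⟩)
  rw [hbox B' hB', mem_interior_Icc_iff] at hyB'
  linarith [show lo B' 1 < y' by simpa using (hyB' 1).1, hy'.2]

/-- Parametrized by the anti-diagonal coordinate `y - x`, so that the staircase is a graph over
the anti-diagonal: this is what makes it separate the quadrant below `o` from the one above. -/
structure IsStaircase_s5 (F : Set (Pt 2)) (o : Pt 2) (δ : ℝ → Pt 2) : Prop where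
  continuous : Continuous δ
  apply_zero : δ 0 = o
  mem : ∀ s, δ s ∈ F
  snd_sub_fst : ∀ s, δ s 1 - δ s 0 = o 1 - o 0 + s
  antitone_fst : Antitone fun s => δ s 0
  monotone_snd : Monotone fun s => δ s 1

lemma IsUpLeftArm.isStaircase {F : Set (Pt 2)} {o : Pt 2} {u w : ℝ → Pt 2}
    (hu : IsUpLeftArm F o u) (hw : IsUpLeftArm (Neg.neg ⁻¹' F) (-o) w) :
    IsStaircase_s5 F o fun s => u s - w (-s) - o where
  continuous := by
    have := hu.continuous
    have := hw.continuous
    fun_prop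
  apply_zero := by simp [hu.eq_of_nonpos 0 le_rfl, hw.eq_of_nonpos 0 le_rfl]
  mem s := by
    rcases le_total 0 s with hs | hs
    · simpa [hw.eq_of_nonpos (-s) (by linarith)] using hu.mem s
    · simpa [hu.eq_of_nonpos s hs] using hw.mem (-s)
  snd_sub_fst s := by
    rcases le_total 0 s with hs | hs
    · have := hu.snd_sub_fst s hs
      simp only [Pi.sub_apply, hw.eq_of_nonpos (-s) (by linarith), Pi.neg_apply]
      linarith
    · have := hw.snd_sub_fst (-s) (by linarith)
      simp only [Pi.sub_apply, hu.eq_of_nonpos s hs, Pi.neg_apply] at this ⊢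
      linarith
  antitone_fst s t hst := by
    simp only [Pi.sub_apply]
    linarith [hu.antitone_fst hst, hw.antitone_fst (neg_le_neg hst)]
  monotone_snd s t hst := by
    simp only [Pi.sub_apply]
    linarith [hu.monotone_snd hst, hw.monotone_snd (neg_le_neg hst)]

theorem exists_isStaircase {O : Finset (Set (Pt 2))} (hO : IsObstacleFamily O) {o : Pt 2}
    (ho : o ∈ free O) : ∃ δ, IsStaircase_s5 (free O) o δ := by
  classical
  obtain ⟨u, hu⟩ := exists_isUpLeftArm hO ho
  obtain ⟨w, hw⟩ := exists_isUpLeftArm (a := -o)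
    (hO.image_preimage (Homeomorph.neg _) fun _ => isBox_preimage_neg)
    (by rw [free_image_preimage]; simpa using ho)
  rw [free_image_preimage, Homeomorph.coe_neg] at hw
  exact ⟨_, hu.isStaircase hw⟩

variable {F : Set (Pt 2)} {o : Pt 2} {δ : ℝ → Pt 2}

lemma IsStaircase_s5.quadrant (hδ : IsStaircase_s5 F o δ) (s : ℝ) :
    (δ s 0 ≤ o 0 ∧ o 1 ≤ δ s 1) ∨ (o 0 ≤ δ s 0 ∧ δ s 1 ≤ o 1) := by
  have h0 := hδ.apply_zero
  rcases le_total 0 s with hs | hs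
  · exact Or.inl ⟨h0 ▸ hδ.antitone_fst hs, h0 ▸ hδ.monotone_snd hs⟩
  · exact Or.inr ⟨h0 ▸ hδ.antitone_fst hs, h0 ▸ hδ.monotone_snd hs⟩

lemma IsStaircase_s5.geo_nrm1_le (hδ : IsStaircase_s5 F o δ) (s : ℝ) :
    geo nrm1 F o (δ s) ≤ ENNReal.ofReal (nrm1 (δ s - o)) := by
  have hη : IsPathIn F o (δ s) fun v => δ (v * s) :=
    ⟨(hδ.continuous.comp (by fun_prop)).continuousOn, by simp [hδ.apply_zero], by simp,
      fun v _ => hδ.mem _⟩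
  have hmul : Monotone (· * s) ∨ Antitone (· * s) := (le_total 0 s).imp
    (fun h _ _ hvw => mul_le_mul_of_nonneg_right hvw h)
    (fun h _ _ hvw => mul_le_mul_of_nonpos_right hvw h)
  have hcoord (i : Fin 2) : Monotone (fun v => δ v i) ∨ Antitone (fun v => δ v i) := by
    fin_cases i
    exacts [Or.inr hδ.antitone_fst, Or.inl hδ.monotone_snd]
  calc geo nrm1 F o (δ s) ≤ pathLen nrm1 fun v => δ (v * s) := iInf₂_le _ hη
    _ ≤ ENNReal.ofReal (nrm1 (δ (1 * s) - δ (0 * s))) := by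
      refine pathLen_nrm1_le_of_monotone_or_antitone _ fun i => ?_
      rcases hcoord i with hf | hf <;> rcases hmul with hg | hg
      exacts [Or.inl (hf.comp hg), Or.inr (hf.comp_antitone hg), Or.inr (hf.comp_monotone hg),
        Or.inl (hf.comp hg)]
    _ = ENNReal.ofReal (nrm1 (δ s - o)) := by simp [hδ.apply_zero]

lemma IsStaircase_s5.exists_apply_eq {G : Set (Pt 2)} {p q : Pt 2} {γ : ℝ → Pt 2}
    (hδ : IsStaircase_s5 F o δ) (hpo : p ≤ o) (hoq : o ≤ q) (hγ : IsPathIn G p q γ) :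
    ∃ t ∈ Set.Icc (0 : ℝ) 1, ∃ s, γ t = δ s := by
  -- `z` lies on the staircase iff `g z = 0`; `g ≤ 0` below it and `g ≥ 0` above it
  set τ : Pt 2 → ℝ := fun z => z 1 - z 0 - (o 1 - o 0)
  set g : Pt 2 → ℝ := fun z => z 0 - δ (τ z) 0
  have hg (z : Pt 2) : g z = z 1 - δ (τ z) 1 := by
    have := hδ.snd_sub_fst (τ z)
    simp only [g, τ] at this ⊢
    linarith
  have hgp : g p ≤ 0 := by
    rcases hδ.quadrant (τ p) with h | h
    · rw [hg]; linarith [hpo 1]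
    · linarith [hpo 0]
  have hgq : 0 ≤ g q := by
    rcases hδ.quadrant (τ q) with h | h
    · linarith [hoq 0]
    · rw [hg]; linarith [hoq 1]
  have hgc : Continuous g := by
    have := hδ.continuous
    fun_prop
  obtain ⟨t, ht, hgt⟩ := intermediate_value_Icc zero_le_one (hgc.comp_continuousOn hγ.1)
    (show (0 : ℝ) ∈ Set.Icc (g (γ 0)) (g (γ 1)) by rw [hγ.2.1, hγ.2.2.1]; exact ⟨hgp, hgq⟩)
  have hgt : g (γ t) = 0 := hgt
  refine ⟨t, ht, τ (γ t), ?_⟩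
  ext i; fin_cases i
  · exact sub_eq_zero.1 hgt
  · exact sub_eq_zero.1 (hg (γ t) ▸ hgt)

end Staircase

theorem exists_geo_le_nrm1_sub_of_le {O : Finset (Set (Pt 2))} (hO : IsObstacleFamily O)
    {p q o : Pt 2} (ho : o ∈ free O) (hpo : p ≤ o) (hoq : o ≤ q) {γ : ℝ → Pt 2}
    (hγ : IsPathIn (free O) p q γ) :
    ∃ r ∈ γ '' Set.Icc (0 : ℝ) 1, geo nrm1 (free O) o r ≤ ENNReal.ofReal (nrm1 (r - o)) := by
  obtain ⟨δ, hδ⟩ := exists_isStaircase hO ho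
  obtain ⟨t, ht, s, hts⟩ := hδ.exists_apply_eq hpo hoq hγ
  exact ⟨γ t, ⟨t, ht, rfl⟩, hts ▸ hδ.geo_nrm1_le s⟩

open Classical in
theorem exists_geo_le_nrm1_sub {O : Finset (Set (Pt 2))} (hO : IsObstacleFamily O)
    {p q o : Pt 2} (ho : o ∈ free O) (hbox : o ∈ corners p q) {γ : ℝ → Pt 2}
    (hγ : IsPathIn (free O) p q γ) :
    ∃ r ∈ γ '' Set.Icc (0 : ℝ) 1, geo nrm1 (free O) o r ≤ ENNReal.ofReal (nrm1 (r - o)) := by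
  set e : Pt 2 := fun i => if p i ≤ q i then 1 else -1
  have he : e * e = 1 := by funext i; by_cases h : p i ≤ q i <;> simp [e, h]
  set σ := signFlip e he
  have hσσ := signFlip_signFlip he
  have hσbox : σ p ≤ σ o ∧ σ o ≤ σ q := by
    refine forall_and.1 fun i => ?_
    have hlo : min (p i) (q i) ≤ o i := hbox.1 i
    have hhi : o i ≤ max (p i) (q i) := hbox.2 i
    by_cases h : p i ≤ q i
    · rw [min_eq_left h] at hlo; rw [max_eq_right h] at hhi
      simp [σ, e, h, hlo, hhi]
    · rw [min_eq_right (le_of_not_ge h)] at hlo; rw [max_eq_left (le_of_not_ge h)] at hhi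
      simp [σ, e, h, hlo, hhi]
  obtain ⟨_, ⟨t, ht, rfl⟩, hr⟩ := exists_geo_le_nrm1_sub_of_le
    (hO.image_preimage σ fun _ => isBox_preimage_signFlip he)
    (by rwa [free_image_preimage, Set.mem_preimage, hσσ]) hσbox.1 hσbox.2
    (hγ.comp σ.continuous fun x hx => by rwa [free_image_preimage, Set.mem_preimage, hσσ])
  rw [free_image_preimage] at hr
  refine ⟨γ t, ⟨t, ht, rfl⟩, ?_⟩
  calc geo nrm1 (free O) o (γ t) = geo nrm1 (free O) (σ (σ o)) (σ (σ (γ t))) := by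
        rw [hσσ, hσσ]
    _ ≤ geo nrm1 (σ ⁻¹' free O) (σ o) (σ (γ t)) :=
        geo_le_geo_preimage σ.continuous (nrm1_signFlip_sub he) _ _ _
    _ ≤ ENNReal.ofReal (nrm1 (σ (γ t) - σ o)) := hr
    _ = ENNReal.ofReal (nrm1 (γ t - o)) := by rw [nrm1_signFlip_sub]

theorem statement_5_general (O : Finset (Set (Pt 2))) (hO : IsObstacleFamily O)
    (p q o : Pt 2) (ho : o ∈ free O)
    (hbox : o ∈ corners p q)
    (γ : ℝ → Pt 2) (hγ : IsPathIn (free O) p q γ)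
    (L : ℝ≥0∞) (hL : pathLen nrm1 γ = L) :
    ∃ r ∈ γ '' Set.Icc (0 : ℝ) 1, geo nrm1 (free O) o r ≤ L := by
  obtain ⟨_, ⟨t, ht, rfl⟩, hr⟩ := exists_geo_le_nrm1_sub hO ho hbox hγ
  refine ⟨γ t, ⟨t, ht, rfl⟩, ?_⟩
  calc geo nrm1 (free O) o (γ t) ≤ ENNReal.ofReal (nrm1 (γ t - o)) := hr
    _ ≤ ENNReal.ofReal (nrm1 (γ t - p) + nrm1 (q - γ t)) :=
        ENNReal.ofReal_le_ofReal (nrm1_sub_le_of_mem_corners hbox _)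
    _ = ENNReal.ofReal (nrm1 (γ t - γ 0)) + ENNReal.ofReal (nrm1 (γ 1 - γ t)) := by
        rw [ENNReal.ofReal_add (nrm1_nonneg _) (nrm1_nonneg _), hγ.2.1, hγ.2.2.1]
    _ ≤ L := hL ▸ ofReal_nrm_add_le_pathLen nrm1 γ ht

/-- in ℝ², along any obstacle-avoiding path γ from p to q of finite
L1-length L, there is a point r on γ with σ₁(o,r) ≤ L, for any o ∈ B(p,q)
outside all obstacle interiors. -/
theorem statement_5 (O : Finset (Set (Pt 2))) (hO : IsObstacleFamily O)
    (p q o : Pt 2) (hp : p ∈ free O) (hq : q ∈ free O) (ho : o ∈ free O)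
    (hbox : o ∈ corners p q)
    (γ : ℝ → Pt 2) (hγ : IsPathIn (free O) p q γ)
    (L : ℝ≥0∞) (hL : pathLen nrm1 γ = L) (hLfin : L ≠ ⊤) :
    ∃ r ∈ γ '' Set.Icc (0 : ℝ) 1, geo nrm1 (free O) o r ≤ L :=
  statement_5_general O hO p q o ho hbox γ hγ L hL

end GeoSpanner
end

section
/- Let 𝒪 be a finite family of pairwise disjoint closed axis-parallel boxes in ℝ³ (obstacles). Let p, q ∈ ℝ³ with pᵢ ≤ qᵢ for i = 1, 2, 3, and let o ∈ B(p,q) lie outside the interior of every obstacle. Then there exists a point w ∈ B(p,q), lying outside the interior of every obstacle, such that at least two of the three coordinates of w equal the corresponding coordinates of q, and σ₁(o,w) ≤ ‖o − q‖₁, where σ₁ denotes the L1-geodesic distance amid the obstacles. (The point w lies on one of the three edges of B(p,q) incident to q and is reachable from o by an obstacle-avoiding path that is monotone in all three coordinates.) -/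
open scoped ENNReal

/-!
Walk from `o` towards `q` one axis at a time. A free point can lie in the relative interior of
the lower face of at most one obstacle, and for at most one axis: two such faces would put the
point in two disjoint closed boxes, or on two lower faces of one box. So as long as two
coordinates still fall short of `q`, one of them can be increased until it reaches `q` or the
lower face of an obstacle in front of the point. Every move ends at one of finitely many levels,
so after finitely many moves the point lies on an edge of `B(p,q)` at `q`. The staircase path is
monotone in every coordinate, so its L1 length is `‖w - o‖₁ ≤ ‖q - o‖₁`.
-/

open Set Function Finset

namespace GeoSpanner

variable {n : ℕ}

theorem sum_succ_sub_castSucc {M : Type*} [AddCommGroup M] (m : ℕ) (f : Fin (m + 1) → M) :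
    ∑ i : Fin m, (f i.succ - f i.castSucc) = f (Fin.last m) - f 0 := by
  induction m with
  | zero => simp
  | succ m ih =>
    rw [Fin.sum_univ_castSucc]
    simp_rw [Fin.succ_castSucc]
    rw [ih fun i => f i.castSucc]
    simp [Fin.succ_last]

theorem nrm1_of_nonneg {v : Pt n} (hv : 0 ≤ v) : nrm1 v = ∑ j, v j :=
  Finset.sum_congr rfl fun j _ => abs_of_nonneg (hv j)

theorem nrm1_sub_comm (x y : Pt n) : nrm1 (x - y) = nrm1 (y - x) :=
  Finset.sum_congr rfl fun j _ => abs_sub_comm (x j) (y j)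

theorem nrm1_sub_le_nrm1_sub {x x' y y' : Pt n} (hx : x' ≤ x) (hxy : x ≤ y) (hy : y ≤ y') :
    nrm1 (y - x) ≤ nrm1 (y' - x') := by
  rw [nrm1_of_nonneg (sub_nonneg.2 hxy), nrm1_of_nonneg (sub_nonneg.2 (hx.trans (hxy.trans hy)))]
  exact Finset.sum_le_sum fun j _ => by simp only [Pi.sub_apply]; linarith [hx j, hy j]

theorem pathLen_nrm1_le_of_monotone {γ : ℝ → Pt n} (hγ : Monotone γ) :
    pathLen nrm1 γ ≤ ENNReal.ofReal (nrm1 (γ 1 - γ 0)) := by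
  refine iSup_le fun m => iSup_le fun t => iSup_le fun ⟨ht, ht01⟩ => ?_
  have hstep (i : Fin m) : 0 ≤ γ (t i.succ) - γ (t i.castSucc) :=
    sub_nonneg.2 (hγ (ht Fin.castSucc_lt_succ.le))
  have hfirst_last : γ (t 0) ≤ γ (t (Fin.last m)) := hγ (ht (Fin.zero_le _))
  have hnonneg (i : Fin m) : 0 ≤ nrm1 (γ (t i.succ) - γ (t i.castSucc)) := by
    rw [nrm1_of_nonneg (hstep i)]
    exact Finset.sum_nonneg fun j _ => hstep i j
  rw [← ENNReal.ofReal_sum_of_nonneg fun i _ => hnonneg i]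
  refine ENNReal.ofReal_le_ofReal ?_
  calc ∑ i : Fin m, nrm1 (γ (t i.succ) - γ (t i.castSucc))
      = ∑ j, ∑ i : Fin m, (γ (t i.succ) - γ (t i.castSucc)) j := by
        simp_rw [nrm1_of_nonneg (hstep _)]
        exact Finset.sum_comm
    _ = nrm1 (γ (t (Fin.last m)) - γ (t 0)) := by
        rw [nrm1_of_nonneg (sub_nonneg.2 hfirst_last), ← sum_succ_sub_castSucc m fun i => γ (t i)]
        simp only [Finset.sum_apply]
    _ ≤ nrm1 (γ 1 - γ 0) :=
        nrm1_sub_le_nrm1_sub (hγ (ht01 0).1) hfirst_last (hγ (ht01 _).2)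

def MonotoneJoinedIn (F : Set (Pt n)) (x y : Pt n) : Prop :=
  ∃ γ : ℝ → Pt n, Continuous γ ∧ Monotone γ ∧ range γ ⊆ F ∧ γ 0 = x ∧ γ 1 = y

namespace MonotoneJoinedIn

variable {F : Set (Pt n)} {x y z : Pt n}

theorem refl (hx : x ∈ F) : MonotoneJoinedIn F x x :=
  ⟨fun _ => x, continuous_const, monotone_const, range_subset_iff.2 fun _ => hx, rfl, rfl⟩

theorem le (h : MonotoneJoinedIn F x y) : x ≤ y := by
  obtain ⟨γ, -, hm, -, rfl, rfl⟩ := h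
  exact hm zero_le_one

theorem mem_right (h : MonotoneJoinedIn F x y) : y ∈ F := by
  obtain ⟨γ, -, -, hF, -, rfl⟩ := h
  exact hF (mem_range_self 1)

theorem trans (h₁ : MonotoneJoinedIn F x y) (h₂ : MonotoneJoinedIn F y z) :
    MonotoneJoinedIn F x z := by
  obtain ⟨γ₁, hc₁, hm₁, hF₁, rfl, rfl⟩ := h₁
  obtain ⟨γ₂, hc₂, hm₂, hF₂, h₂₀, rfl⟩ := h₂
  refine ⟨fun t => if t ≤ 1 / 2 then γ₁ (2 * t) else γ₂ (2 * t - 1), ?_, ?_, ?_, ?_, ?_⟩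
  · refine Continuous.if_le (hc₁.comp (by fun_prop)) (hc₂.comp (by fun_prop))
      continuous_id continuous_const ?_
    rintro t rfl
    norm_num [h₂₀]
  · intro s t hst
    dsimp only
    split_ifs with hs ht ht
    · exact hm₁ (by linarith)
    · calc γ₁ (2 * s) ≤ γ₁ 1 := hm₁ (by linarith)
        _ = γ₂ 0 := h₂₀.symm
        _ ≤ γ₂ (2 * t - 1) := hm₂ (by linarith)
    · linarith
    · exact hm₂ (by linarith)
  · rintro _ ⟨t, rfl⟩
    dsimp only
    split_ifs
    exacts [hF₁ (mem_range_self _), hF₂ (mem_range_self _)]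
  · norm_num
  · norm_num

theorem of_Icc_subset (hxy : x ≤ y) (h : Icc x y ⊆ F) : MonotoneJoinedIn F x y := by
  let s : ℝ → ℝ := fun t => projIcc 0 1 zero_le_one t
  have hs : Monotone s := fun _ _ hst => Subtype.mono_coe _ (monotone_projIcc _ hst)
  refine ⟨fun t => x + s t • (y - x), by fun_prop, fun _ _ hst => ?_, ?_, by simp [s], by simp [s]⟩
  · exact add_le_add_right (smul_le_smul_of_nonneg_right (hs hst) (sub_nonneg.2 hxy)) _
  · rintro _ ⟨t, rfl⟩
    exact h ((convex_Icc x y).add_smul_sub_mem (left_mem_Icc.2 hxy) (right_mem_Icc.2 hxy)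
      (projIcc 0 1 zero_le_one t).2)

theorem geo_nrm1_le (h : MonotoneJoinedIn F x y) :
    geo nrm1 F x y ≤ ENNReal.ofReal (nrm1 (y - x)) := by
  obtain ⟨γ, hc, hm, hF, rfl, rfl⟩ := h
  exact (iInf₂_le γ ⟨hc.continuousOn, rfl, rfl, fun t _ => hF (mem_range_self t)⟩).trans
    (pathLen_nrm1_le_of_monotone hm)

end MonotoneJoinedIn

section Boxes

variable {ι : Type*} (a b : ι → Pt n)

def boxFree : Set (Pt n) := {z | ∀ k, z ∉ univ.pi fun j => Ioo (a k j) (b k j)}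

def InCrossSection (k : ι) (i : Fin n) (x : Pt n) : Prop :=
  ∀ j ≠ i, x j ∈ Ioo (a k j) (b k j)

/-- Every move from `x` in direction `i` immediately enters the interior of box `k`. -/
def IsBlocked (i : Fin n) (x : Pt n) : Prop :=
  ∃ k, InCrossSection a b k i x ∧ x i = a k i ∧ a k i < b k i

noncomputable def levels [Fintype ι] (q : Pt n) (i : Fin n) : Finset ℝ :=
  insert (q i) (univ.image fun k => a k i)

noncomputable def numLevelsAbove [Fintype ι] (q x : Pt n) : ℕ :=
  ∑ i, ((levels a q i).filter (x i < ·)).card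

variable {a b}

theorem not_isBlocked_of_isBlocked (hdisj : Pairwise (Disjoint on fun k => Icc (a k) (b k)))
    {i i' : Fin n} {x : Pt n} (hii' : i ≠ i') (h : IsBlocked a b i x) : ¬ IsBlocked a b i' x := by
  have mem_Icc {k i} (hk : InCrossSection a b k i x) (hx : x i = a k i) (hab : a k i < b k i) :
      x ∈ Icc (a k) (b k) := by
    rw [← pi_univ_Icc]
    intro j _
    rcases eq_or_ne j i with rfl | hj
    exacts [⟨hx.ge, hx ▸ hab.le⟩, Ioo_subset_Icc_self (hk j hj)]
  obtain ⟨k, hk, hx, hab⟩ := h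
  rintro ⟨k', hk', hx', hab'⟩
  rcases eq_or_ne k k' with rfl | hkk'
  · exact (hk i' hii'.symm).1.ne' hx'
  · exact disjoint_left.1 (hdisj hkk') (mem_Icc hk hx hab) (mem_Icc hk' hx' hab')

variable [Fintype ι]

theorem exists_Icc_update_subset_boxFree {q x : Pt n} {i : Fin n} (hx : x ∈ boxFree a b) (hxq : x i < q i)
    (hnb : ¬ IsBlocked a b i x) :
    ∃ c ∈ levels a q i, x i < c ∧ c ≤ q i ∧ Icc x (update x i c) ⊆ boxFree a b := by
  classical
  -- the first level ahead of `x`: `q i`, or the lower `i`-face of a box whose cross-section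
  -- contains `x`
  let S := insert (q i) ((univ.filter fun k => InCrossSection a b k i x ∧ x i < a k i).image
    fun k => a k i)
  have hS : S.Nonempty := insert_nonempty _ _
  refine ⟨S.min' hS, ?_, ?_, S.min'_le _ (mem_insert_self _ _), ?_⟩
  · exact insert_subset_insert _ (image_subset_image (filter_subset _ _)) (S.min'_mem hS)
  · refine (S.lt_min'_iff hS).2 fun c hc => ?_
    simp only [S, Finset.mem_insert, Finset.mem_image, Finset.mem_filter, Finset.mem_univ,
      true_and] at hc
    obtain rfl | ⟨k, ⟨-, hk⟩, rfl⟩ := hc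
    exacts [hxq, hk]
  · intro z ⟨hxz, hzc⟩ k hzk
    have hzx (j) (hj : j ≠ i) : z j = x j :=
      le_antisymm (by simpa [update_of_ne hj] using hzc j) (hxz j)
    have hk : InCrossSection a b k i x := fun j hj => hzx j hj ▸ hzk j (mem_univ j)
    have hzi : z i ∈ Ioo (a k i) (b k i) := hzk i (mem_univ i)
    rcases lt_trichotomy (x i) (a k i) with hlt | heq | hgt
    · have hc : S.min' hS ≤ a k i :=
        S.min'_le _ (mem_insert_of_mem (mem_image_of_mem _ (by simp [hk, hlt])))
      have hzc_i : z i ≤ S.min' hS := by simpa using hzc i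
      linarith [hzi.1]
    · exact hnb ⟨k, hk, heq, hzi.1.trans hzi.2⟩
    · refine hx k fun j _ => ?_
      rcases eq_or_ne j i with rfl | hj
      exacts [⟨hgt, (hxz j).trans_lt hzi.2⟩, hk j hj]

theorem numLevelsAbove_update_lt {q x : Pt n} {i : Fin n} {c : ℝ} (hxc : x i < c)
    (hc : c ∈ levels a q i) : numLevelsAbove a q (update x i c) < numLevelsAbove a q x := by
  have hsub : (levels a q i).filter (c < ·) ⊆ (levels a q i).filter (x i < ·) :=
    Finset.monotone_filter_right _ fun _ _ hcv => hxc.trans hcv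
  have hlt : ((levels a q i).filter (c < ·)).card < ((levels a q i).filter (x i < ·)).card :=
    card_lt_card <| (Finset.ssubset_iff_of_subset hsub).2
      ⟨c, Finset.mem_filter.2 ⟨hc, hxc⟩, fun h => (Finset.mem_filter.1 h).2.false⟩
  refine Finset.sum_lt_sum (fun j _ => ?_) ⟨i, Finset.mem_univ i, by rwa [update_self]⟩
  rcases eq_or_ne j i with rfl | hj
  · rw [update_self]
    exact hlt.le
  · rw [update_of_ne hj]

theorem exists_monotoneJoinedIn_subsingleton_ne
    (hdisj : Pairwise (Disjoint on fun k => Icc (a k) (b k))) {q x : Pt n}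
    (hx : x ∈ boxFree a b) (hxq : x ≤ q) :
    ∃ w, MonotoneJoinedIn (boxFree a b) x w ∧ w ≤ q ∧ {j | w j ≠ q j}.Subsingleton := by
  induction hN : numLevelsAbove a q x using Nat.strong_induction_on generalizing x with
  | _ N ih =>
  by_cases hedge : {j | x j ≠ q j}.Subsingleton
  · exact ⟨x, .refl hx, hxq, hedge⟩
  obtain ⟨i, hi, i', hi', hii'⟩ := not_subsingleton_iff.1 hedge
  obtain ⟨i, hiq, hnb⟩ : ∃ i, x i < q i ∧ ¬ IsBlocked a b i x := by
    by_cases hb : IsBlocked a b i x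
    · exact ⟨i', (hxq i').lt_of_ne hi', not_isBlocked_of_isBlocked hdisj hii' hb⟩
    · exact ⟨i, (hxq i).lt_of_ne hi, hb⟩
  obtain ⟨c, hc, hxc, hcq, hseg⟩ := exists_Icc_update_subset_boxFree hx hiq hnb
  have hxy : x ≤ update x i c := le_update_iff.2 ⟨hxc.le, fun _ _ => le_rfl⟩
  have hyq : update x i c ≤ q := update_le_iff.2 ⟨hcq, fun j _ => hxq j⟩
  obtain ⟨w, hyw, hwq, hw⟩ :=
    ih _ (hN ▸ numLevelsAbove_update_lt hxc hc) (hseg ⟨hxy, le_rfl⟩) hyq rfl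
  exact ⟨w, (MonotoneJoinedIn.of_Icc_subset hxy hseg).trans hyw, hwq, hw⟩

end Boxes

theorem exists_two_eq_of_subsingleton {w q : Pt 3} (h : {j | w j ≠ q j}.Subsingleton) :
    ∃ i j : Fin 3, i ≠ j ∧ w i = q i ∧ w j = q j := by
  have eq_of_ne {i j : Fin 3} (hij : i ≠ j) (hi : w i ≠ q i) : w j = q j :=
    not_not.1 fun hj => hij (h hi hj)
  by_cases h0 : w 0 = q 0
  · by_cases h1 : w 1 = q 1
    · exact ⟨0, 1, by decide, h0, h1⟩
    · exact ⟨0, 2, by decide, h0, eq_of_ne (by decide) h1⟩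
  · exact ⟨1, 2, by decide, eq_of_ne (by decide) h0, eq_of_ne (by decide) h0⟩

theorem interior_Icc_eq_pi (a b : Pt n) :
    interior (Icc a b) = univ.pi fun j => Ioo (a j) (b j) := by
  rw [← pi_univ_Icc, interior_pi_set finite_univ]
  simp only [interior_Icc]

theorem free_eq_boxFree {O : Finset (Set (Pt n))} {a b : O → Pt n}
    (h : ∀ B : O, (B : Set (Pt n)) = Icc (a B) (b B)) : free O = boxFree a b := by
  ext z
  simp only [free, boxFree, mem_ofPred_eq, ← interior_Icc_eq_pi, ← h, Subtype.forall]

/-- from any o ∈ B(p,q) outside all obstacle interiors (with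
p ≤ q componentwise) there is a point w on one of the three edges of B(p,q)
incident to q (i.e. w ∈ B(p,q) with at least two coordinates equal to those of
q), outside all obstacle interiors, with σ₁(o,w) ≤ ‖o − q‖₁. -/
theorem statement_11 (O : Finset (Set (Pt 3))) (hO : IsObstacleFamily O)
    (p q : Pt 3) (hpq : p ≤ q)
    (o : Pt 3) (hobox : o ∈ corners p q) (hofree : o ∈ free O) :
    ∃ w : Pt 3, w ∈ corners p q ∧ w ∈ free O ∧
      (∃ i j : Fin 3, i ≠ j ∧ w i = q i ∧ w j = q j) ∧
      geo nrm1 (free O) o w ≤ ENNReal.ofReal (nrm1 (o - q)) := by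
  obtain ⟨hbox, hdisj⟩ := hO
  choose a b hab using fun B : O => hbox B B.2
  have hfree : free O = boxFree a b := free_eq_boxFree fun B => (hab B).2
  have hdisj' : Pairwise (Disjoint on fun B => Icc (a B) (b B)) := fun B B' hBB' => by
    simpa only [← (hab _).2] using hdisj B.2 B'.2 (Subtype.coe_injective.ne hBB')
  rw [corners, uIcc_of_le hpq] at hobox ⊢
  rw [hfree] at hofree ⊢
  obtain ⟨w, how, hwq, hedge⟩ := exists_monotoneJoinedIn_subsingleton_ne hdisj' hofree hobox.2
  refine ⟨w, ⟨hobox.1.trans how.le, hwq⟩, how.mem_right, exists_two_eq_of_subsingleton hedge, ?_⟩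
  calc geo nrm1 (boxFree a b) o w ≤ ENNReal.ofReal (nrm1 (w - o)) := how.geo_nrm1_le
    _ ≤ ENNReal.ofReal (nrm1 (o - q)) := by
      rw [nrm1_sub_comm o q]
      exact ENNReal.ofReal_le_ofReal (nrm1_sub_le_nrm1_sub le_rfl how.le hwq)

end GeoSpanner
end

section
/- Let O = [a₁,b₁] × [a₂,b₂] × [a₃,b₃] be a closed axis-parallel box in ℝ³, and let p, q ∈ ℝ³ be points not in the interior of O. Let o ∈ B(p,q) ∩ O. For each coordinate i ∈ {1,2,3}, let o_{i+} (resp. o_{i−}) be the point obtained from o by replacing its i-th coordinate with bᵢ (resp. aᵢ). Then at least one of the six points o_{1+}, o_{1−}, o_{2+}, o_{2−}, o_{3+}, o_{3−} lies in B(p,q). -/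
open scoped ENNReal

/-!
Since `p` is outside the interior of `O`, some coordinate satisfies `pᵢ ≤ aᵢ` or `bᵢ ≤ pᵢ`. In the
first case `aᵢ` lies between `pᵢ` and `oᵢ`, in the second `bᵢ` does, hence between `pᵢ` and `qᵢ`;
moving `o` along axis `i` to that facet of `O` therefore stays in `B(p,q)`.
-/

open Set Function

namespace GeoSpanner

theorem exists_le_or_le_of_notMem_interior_Icc {ι α : Type*} [Finite ι] [LinearOrder α]
    [TopologicalSpace α] [OrderTopology α] [DenselyOrdered α] [NoMinOrder α] [NoMaxOrder α]
    {a b p : ι → α} (hp : p ∉ interior (Icc a b)) : ∃ i, p i ≤ a i ∨ b i ≤ p i := by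
  rw [← pi_univ_Icc, interior_pi_set finite_univ] at hp
  simpa [interior_Icc, imp_iff_not_or] using hp

theorem update_mem_uIcc {ι : Type*} {α : ι → Type*} [DecidableEq ι] [∀ i, Lattice (α i)]
    {p q o : ∀ i, α i} (ho : o ∈ uIcc p q) {i : ι} {x : α i} (hx : x ∈ uIcc (p i) (q i)) :
    update o i x ∈ uIcc p q := by
  rw [← pi_univ_uIcc] at ho ⊢
  exact (update_mem_pi_iff_of_mem ho).2 fun _ => hx

theorem exists_update_mem_uIcc_of_notMem_interior_Icc {ι α : Type*} [Finite ι] [DecidableEq ι]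
    [LinearOrder α] [TopologicalSpace α] [OrderTopology α] [DenselyOrdered α] [NoMinOrder α]
    [NoMaxOrder α] {a b p q o : ι → α} (hp : p ∉ interior (Icc a b)) (ho : o ∈ uIcc p q)
    (hoab : o ∈ Icc a b) : ∃ i, update o i (b i) ∈ uIcc p q ∨ update o i (a i) ∈ uIcc p q := by
  obtain ⟨i, hi⟩ := exists_le_or_le_of_notMem_interior_Icc hp
  have hoi : o i ∈ uIcc (p i) (q i) := by
    rw [← pi_univ_uIcc] at ho
    exact ho i (mem_univ i)
  refine ⟨i, ?_⟩
  rcases hi with hpa | hbp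
  · exact .inr <| update_mem_uIcc ho <|
      uIcc_subset_uIcc_left hoi (Icc_subset_uIcc ⟨hpa, hoab.1 i⟩)
  · exact .inl <| update_mem_uIcc ho <|
      uIcc_subset_uIcc_left hoi (Icc_subset_uIcc' ⟨hoab.2 i, hbp⟩)

theorem statement_12_general (a b : Pt 3) (p q : Pt 3)
    (hp : p ∉ interior (Set.Icc a b))
    (o : Pt 3) (ho : o ∈ corners p q ∩ Set.Icc a b) :
    ∃ i : Fin 3,
      Function.update o i (b i) ∈ corners p q ∨
      Function.update o i (a i) ∈ corners p q :=
  exists_update_mem_uIcc_of_notMem_interior_Icc hp ho.1 ho.2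

/-- if p, q avoid the interior of the box O = Icc a b and
o ∈ B(p,q) ∩ O, then one of the six axis-projections of o onto the boundary
facets of O lies in B(p,q). -/
theorem statement_12 (a b : Pt 3) (hab : a ≤ b) (p q : Pt 3)
    (hp : p ∉ interior (Set.Icc a b)) (hq : q ∉ interior (Set.Icc a b))
    (o : Pt 3) (ho : o ∈ corners p q ∩ Set.Icc a b) :
    ∃ i : Fin 3,
      Function.update o i (b i) ∈ corners p q ∨
      Function.update o i (a i) ∈ corners p q :=
  statement_12_general a b p q hp o ho

end GeoSpanner
end
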